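/- arXiv:2007.01512 — 9 statements merged into one kernel-verified Lean document; each statement's English description precedes it below -/
import Mathlib

section
/- Let d ≥ 1 and let 0 < r₁ < r₂. Let φ : ℝ^d → [0,∞) be measurable and bounded with inf_{|x| ≤ r₁} φ(x) > 0 and φ(x) = 0 for |x| > r₂. Then there exists a constant C, depending only on d and φ, such that for every nonnegative integrable function ρ : ℝ^d → [0,∞) and every y ∈ ℝ^d one has ∫_{ℝ^d} (ρ(x) / (φ*ρ)(x)) · φ(x−y) dx ≤ C, where the integrand is taken to be 0 at every point x with (φ*ρ)(x) = 0. -/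
open MeasureTheory
open scoped ENNReal

abbrev Euc (d : ℕ) : Type := EuclideanSpace ℝ (Fin d)

/-!
The support `closedBall y r₂` of `φ (· - y)` is covered by a number `N` of balls of radius
`r₁ / 2` that does not depend on `y`. Any two points of such a ball `B` are at distance at most
`r₁`, so `(φ * ρ)(x) ≥ c ∫_B ρ` for `x ∈ B`, whence `∫_B ρ / (φ * ρ) ≤ 1 / c` whatever `ρ` is.
Bounding `φ (x - y) ≤ M` and summing over the balls gives the constant `N M / c`.
-/

open Metric Set

lemma setLIntegral_biUnion_finset_le {ι α : Type*} [MeasurableSpace α] {μ : Measure α}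
    (t : Finset ι) (s : ι → Set α) (f : α → ℝ≥0∞) :
    ∫⁻ a in ⋃ i ∈ t, s i, f a ∂μ ≤ ∑ i ∈ t, ∫⁻ a in s i, f a ∂μ := by
  rw [← Finset.set_biUnion_coe, Set.biUnion_eq_iUnion, ← Finset.tsum_subtype]
  exact lintegral_iUnion_le _ f

lemma exists_finset_closedBall_subset_biUnion_add_ball {E : Type*} [SeminormedAddCommGroup E]
    [ProperSpace E] (R : ℝ) {δ : ℝ} (hδ : 0 < δ) :
    ∃ t : Finset E, ∀ y, closedBall y R ⊆ ⋃ p ∈ t, ball (y + p) δ := by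
  obtain ⟨t, -, htf, hcover⟩ := finite_cover_balls_of_compact (isCompact_closedBall (0 : E) R) hδ
  refine ⟨htf.toFinset, fun y x hx => ?_⟩
  have hxy : x - y ∈ closedBall 0 R := by
    rwa [mem_closedBall, dist_zero_right, ← dist_eq_norm]
  obtain ⟨p, hp, hxp⟩ := mem_iUnion₂.1 (hcover hxy)
  refine mem_iUnion₂.2 ⟨p, htf.mem_toFinset.2 hp, ?_⟩
  rwa [mem_ball, dist_eq_norm, ← sub_sub, ← dist_eq_norm]

section KernelConv

variable {E : Type*} [NormedAddCommGroup E] [MeasurableSpace E] {μ : Measure E}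
  {φ ρ : E → ℝ} {s : Set E} {c : ℝ}

/-- The convolution `(φ * ρ)(x)` of the paper. -/
noncomputable def kernelConv (μ : Measure E) (φ ρ : E → ℝ) (x : E) : ℝ :=
  ∫ z, φ (x - z) * ρ z ∂μ

lemma kernelConv_nonneg (hφ : ∀ x, 0 ≤ φ x) (hρ : ∀ x, 0 ≤ ρ x) (x : E) :
    0 ≤ kernelConv μ φ ρ x :=
  integral_nonneg fun z => mul_nonneg (hφ _) (hρ z)

lemma mul_setIntegral_le_kernelConv (hφ : ∀ x, 0 ≤ φ x) (hρ : ∀ x, 0 ≤ ρ x)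
    (hρi : Integrable ρ μ) (hs : MeasurableSet s) {x : E} (hc : ∀ z ∈ s, c ≤ φ (x - z))
    (hint : Integrable (fun z => φ (x - z) * ρ z) μ) :
    c * ∫ z in s, ρ z ∂μ ≤ kernelConv μ φ ρ x :=
  calc c * ∫ z in s, ρ z ∂μ = ∫ z in s, c * ρ z ∂μ := (integral_const_mul c ρ).symm
    _ ≤ ∫ z in s, φ (x - z) * ρ z ∂μ :=
      setIntegral_mono_on (hρi.integrableOn.const_mul c) hint.integrableOn hs
        fun z hz => mul_le_mul_of_nonneg_right (hc z hz) (hρ z)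
    _ ≤ kernelConv μ φ ρ x :=
      setIntegral_le_integral hint (Filter.Eventually.of_forall fun z => mul_nonneg (hφ _) (hρ z))

lemma div_kernelConv_le (hφ : ∀ x, 0 ≤ φ x) (hρ : ∀ x, 0 ≤ ρ x) (hρi : Integrable ρ μ)
    (hs : MeasurableSet s) {x : E} (hc : ∀ z ∈ s, c ≤ φ (x - z))
    (hcI : 0 < c * ∫ z in s, ρ z ∂μ) :
    ρ x / kernelConv μ φ ρ x ≤ ρ x / (c * ∫ z in s, ρ z ∂μ) := by
  by_cases hint : Integrable (fun z => φ (x - z) * ρ z) μ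
  · exact div_le_div_of_nonneg_left (hρ x) hcI
      (mul_setIntegral_le_kernelConv hφ hρ hρi hs hc hint)
  · -- the Bochner integral of a non-integrable function is `0`, and so is `ρ x / 0`
    rw [kernelConv, integral_undef hint, div_zero]
    exact div_nonneg (hρ x) hcI.le

lemma setLIntegral_div_kernelConv_le (hφ : ∀ x, 0 ≤ φ x) (hρ : ∀ x, 0 ≤ ρ x)
    (hρi : Integrable ρ μ) (hs : MeasurableSet s) (hc₀ : 0 < c)
    (hc : ∀ x ∈ s, ∀ z ∈ s, c ≤ φ (x - z)) :
    ∫⁻ x in s, ENNReal.ofReal (ρ x / kernelConv μ φ ρ x) ∂μ ≤ ENNReal.ofReal c⁻¹ := by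
  set I := ∫ z in s, ρ z ∂μ
  rcases (setIntegral_nonneg hs fun z _ => hρ z).eq_or_lt with hI | hI
  · have hρs : ρ =ᵐ[μ.restrict s] 0 :=
      (integral_eq_zero_iff_of_nonneg hρ hρi.integrableOn).1 hI.symm
    calc ∫⁻ x in s, ENNReal.ofReal (ρ x / kernelConv μ φ ρ x) ∂μ = ∫⁻ _ in s, 0 ∂μ :=
          lintegral_congr_ae (hρs.mono fun x hx => by simp [hx])
      _ ≤ ENNReal.ofReal c⁻¹ := by simp
  · have hcI : 0 < c * I := mul_pos hc₀ hI
    calc ∫⁻ x in s, ENNReal.ofReal (ρ x / kernelConv μ φ ρ x) ∂μ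
        ≤ ∫⁻ x in s, ENNReal.ofReal (c * I)⁻¹ * ENNReal.ofReal (ρ x) ∂μ := by
          refine setLIntegral_mono' hs fun x hx => ?_
          rw [← ENNReal.ofReal_mul (inv_nonneg.2 hcI.le), ← div_eq_inv_mul]
          exact ENNReal.ofReal_le_ofReal (div_kernelConv_le hφ hρ hρi hs (hc x hx) hcI)
      _ = ENNReal.ofReal (c * I)⁻¹ * ENNReal.ofReal I := by
          rw [lintegral_const_mul' _ _ ENNReal.ofReal_ne_top,
            ofReal_integral_eq_lintegral_ofReal hρi.integrableOn (ae_of_all _ hρ)]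
      _ = ENNReal.ofReal c⁻¹ := by
          rw [← ENNReal.ofReal_mul (inv_nonneg.2 hcI.le), mul_inv, inv_mul_cancel_right₀ hI.ne']

lemma lintegral_div_kernelConv_mul_le [OpensMeasurableSpace E] {M r₁ r₂ : ℝ}
    (hφ : ∀ x, 0 ≤ φ x) (hφM : ∀ x, φ x ≤ M) (hc₀ : 0 < c) (hφc : ∀ x, ‖x‖ ≤ r₁ → c ≤ φ x)
    (hφsupp : ∀ x, r₂ < ‖x‖ → φ x = 0) {t : Finset E}
    (ht : ∀ y, closedBall y r₂ ⊆ ⋃ p ∈ t, ball (y + p) (r₁ / 2))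
    (hρ : ∀ x, 0 ≤ ρ x) (hρi : Integrable ρ μ) (y : E) :
    ∫⁻ x, ENNReal.ofReal (ρ x / kernelConv μ φ ρ x * φ (x - y)) ∂μ
      ≤ ENNReal.ofReal (M * (t.card * c⁻¹)) := by
  set f := fun x => ENNReal.ofReal (ρ x / kernelConv μ φ ρ x)
  have hf_supp : (fun x => ENNReal.ofReal (ρ x / kernelConv μ φ ρ x * φ (x - y))).support
      ⊆ closedBall y r₂ := by
    intro x hx
    by_contra hxy
    rw [mem_closedBall, dist_eq_norm, not_le] at hxy
    simp [hφsupp _ hxy] at hx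
  have hball (p : E) : ∀ x ∈ ball (y + p) (r₁ / 2), ∀ z ∈ ball (y + p) (r₁ / 2), c ≤ φ (x - z) :=
    fun x hx z hz => hφc _ <| by
      rw [← dist_eq_norm]; linarith [dist_triangle_right x z (y + p), mem_ball.1 hx, mem_ball.1 hz]
  calc ∫⁻ x, ENNReal.ofReal (ρ x / kernelConv μ φ ρ x * φ (x - y)) ∂μ
      = ∫⁻ x in closedBall y r₂, ENNReal.ofReal (ρ x / kernelConv μ φ ρ x * φ (x - y)) ∂μ :=
        (setLIntegral_eq_of_support_subset hf_supp).symm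
    _ ≤ ∫⁻ x in closedBall y r₂, ENNReal.ofReal M * f x ∂μ := by
        refine setLIntegral_mono' measurableSet_closedBall fun x _ => ?_
        have hratio := div_nonneg (hρ x) (kernelConv_nonneg (μ := μ) hφ hρ x)
        rw [← ENNReal.ofReal_mul' hratio, mul_comm M]
        exact ENNReal.ofReal_le_ofReal (mul_le_mul_of_nonneg_left (hφM _) hratio)
    _ = ENNReal.ofReal M * ∫⁻ x in closedBall y r₂, f x ∂μ :=
        lintegral_const_mul' _ _ ENNReal.ofReal_ne_top
    _ ≤ ENNReal.ofReal M * ∑ p ∈ t, ∫⁻ x in ball (y + p) (r₁ / 2), f x ∂μ := by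
        gcongr
        exact (lintegral_mono_set (ht y)).trans (setLIntegral_biUnion_finset_le _ _ _)
    _ ≤ ENNReal.ofReal M * ∑ _p ∈ t, ENNReal.ofReal c⁻¹ := by
        gcongr with p
        exact setLIntegral_div_kernelConv_le hφ hρ hρi measurableSet_ball hc₀ (hball p)
    _ = ENNReal.ofReal (M * (t.card * c⁻¹)) := by
        rw [ENNReal.ofReal_mul' (by positivity), ENNReal.ofReal_mul (by positivity),
          Finset.sum_const, nsmul_eq_mul, ENNReal.ofReal_natCast]

end KernelConv

theorem stmt0_general (d : ℕ) (r₁ r₂ : ℝ) (hr₁ : 0 < r₁)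
    (φ : Euc d → ℝ) (hφnonneg : ∀ x, 0 ≤ φ x)
    (hφbdd : ∃ M : ℝ, ∀ x, φ x ≤ M)
    (hφinf : ∃ c : ℝ, 0 < c ∧ ∀ x, ‖x‖ ≤ r₁ → c ≤ φ x)
    (hφsupp : ∀ x, r₂ < ‖x‖ → φ x = 0) :
    ∃ C : ℝ, ∀ ρ : Euc d → ℝ, Measurable ρ → (∀ x, 0 ≤ ρ x) → Integrable ρ →
      ∀ y : Euc d,
        (∫⁻ x, ENNReal.ofReal
          (if (∫ z, φ (x - z) * ρ z) = 0 then 0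
           else ρ x / (∫ z, φ (x - z) * ρ z) * φ (x - y)))
          ≤ ENNReal.ofReal C := by
  obtain ⟨M, hM⟩ := hφbdd
  obtain ⟨c, hc₀, hc⟩ := hφinf
  obtain ⟨t, ht⟩ := exists_finset_closedBall_subset_biUnion_add_ball (E := Euc d) r₂ (half_pos hr₁)
  refine ⟨M * (t.card * c⁻¹), fun ρ _ hρ hρi y => ?_⟩
  refine le_of_eq_of_le (lintegral_congr fun x => ?_)
    (lintegral_div_kernelConv_mul_le hφnonneg hM hc₀ hc hφsupp ht hρ hρi y)
  -- the `if` is redundant, since `ρ x / 0 = 0`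
  split_ifs with h0
  · simp [kernelConv, h0]
  · rfl

/-- The key inequality underlying the control of the Motsch–Tadmor local
average velocity: for `φ ≥ 0` bounded, bounded below on the ball of radius `r₁` and
supported in the ball of radius `r₂`, there is a constant `C = C(d, φ)` such that for every
nonnegative integrable `ρ` and every `y`, `∫ ρ(x)/(φ*ρ)(x) · φ(x−y) dx ≤ C` (with the
integrand taken to be `0` where `(φ*ρ)(x) = 0`). -/
theorem stmt0 (d : ℕ) (hd : 1 ≤ d) (r₁ r₂ : ℝ) (hr₁ : 0 < r₁) (hr₁₂ : r₁ < r₂)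
    (φ : Euc d → ℝ) (hφmeas : Measurable φ) (hφnonneg : ∀ x, 0 ≤ φ x)
    (hφbdd : ∃ M : ℝ, ∀ x, φ x ≤ M)
    (hφinf : ∃ c : ℝ, 0 < c ∧ ∀ x, ‖x‖ ≤ r₁ → c ≤ φ x)
    (hφsupp : ∀ x, r₂ < ‖x‖ → φ x = 0) :
    ∃ C : ℝ, ∀ ρ : Euc d → ℝ, Measurable ρ → (∀ x, 0 ≤ ρ x) → Integrable ρ →
      ∀ y : Euc d,
        (∫⁻ x, ENNReal.ofReal
          (if (∫ z, φ (x - z) * ρ z) = 0 then 0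
           else ρ x / (∫ z, φ (x - z) * ρ z) * φ (x - y)))
          ≤ ENNReal.ofReal C :=
  stmt0_general d r₁ r₂ hr₁ φ hφnonneg hφbdd hφinf hφsupp
end

section
/- Let d ≥ 1, let 0 < r₁ < r₂, and let φ : ℝ^d → [0,∞) be measurable and bounded with inf_{|x| ≤ r₁} φ(x) > 0 and φ(x) = 0 for |x| > r₂. Let R > 0 and let θ_R : ℝ^d → ℝ^d be measurable with |θ_R(w)| ≤ |w| for all w. Then there exists a constant C, depending only on d and φ (in particular not on R, p or f), such that for every p ≥ 1 and every integrable f : ℝ^d × ℝ^d → [0,∞) with ∫ |v|^p f(x,v) dx dv < ∞, one has ∫_{ℝ^{2d}} |u_R[f](x)|^p f(x,v) dx dv ≤ C ∫_{ℝ^{2d}} |v|^p f(x,v) dx dv. -/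
/-!
By Jensen's inequality for the weights `φ(x - y) f(y, w)`, whose total mass `(φ ⋆ ρ)(x)` is at most
the denominator `R⁻¹ + (φ ⋆ ρ)(x)` (here `ρ(x) = ∫ f(x, v) dv`), one has
`|u_R(x)|^p ≤ ∫ φ(x - y) |w|^p f(y, w) / (R⁻¹ + (φ ⋆ ρ)(x))`. Integrating against `f` and
exchanging the order of integration, it suffices to bound
`∫ ρ(x) φ(x - y) / (R⁻¹ + (φ ⋆ ρ)(x)) dx` uniformly in `y`. Cover the ball of radius `r₂` by `N`
balls of radius `r₁ / 2`: on each translate `B` of one of them `φ ⋆ ρ ≥ c ∫_B ρ`, so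
`∫_B ρ / (R⁻¹ + φ ⋆ ρ) ≤ 1 / c`, and the bound is `C = M N / c` where `φ ≤ M`.
-/

open MeasureTheory
open scoped ENNReal

/-- The regularized Motsch–Tadmor local average velocity
`u_R[f](x) = (∫ φ(x−y) θ_R(w) f(y,w) dy dw) / (R⁻¹ + ∫ φ(x−y) f(y,w) dy dw)`. -/
noncomputable def uReg (d : ℕ) (R : ℝ) (φ : Euc d → ℝ) (θR : Euc d → Euc d)
    (f : Euc d × Euc d → ℝ) (x : Euc d) : Euc d :=
  (R⁻¹ + ∫ ζ : Euc d × Euc d, φ (x - ζ.1) * f ζ)⁻¹ •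
    ∫ ζ : Euc d × Euc d, (φ (x - ζ.1) * f ζ) • θR ζ.2

section MeasureSpace

variable {α : Type*} [MeasurableSpace α] {μ : Measure α}

theorem lintegral_mul_rpow_le {G W : α → ℝ≥0∞} (hG : AEMeasurable G μ) (hW : AEMeasurable W μ)
    {p : ℝ} (hp : 1 ≤ p) :
    (∫⁻ a, G a * W a ∂μ) ^ p ≤ (∫⁻ a, G a ∂μ) ^ (p - 1) * ∫⁻ a, G a * W a ^ p ∂μ := by
  have hp0 : 0 < p := zero_lt_one.trans_le hp
  have hp_inv : 0 ≤ 1 - p⁻¹ := by simpa using inv_le_one_of_one_le₀ hp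
  have hGW : AEMeasurable (fun a => G a * W a ^ p) μ := hG.mul (hW.pow_const p)
  have holder := ENNReal.lintegral_mul_norm_pow_le hG hGW hp_inv
    (inv_nonneg.2 hp0.le) (sub_add_cancel 1 p⁻¹)
  have split : ∀ a, G a ^ (1 - p⁻¹) * (G a * W a ^ p) ^ p⁻¹ = G a * W a := fun a => by
    rw [ENNReal.mul_rpow_of_nonneg _ _ (by positivity), ← ENNReal.rpow_mul,
      mul_inv_cancel₀ hp0.ne', ENNReal.rpow_one, ← mul_assoc,
      ← ENNReal.rpow_add_of_nonneg _ _ hp_inv (by positivity), sub_add_cancel, ENNReal.rpow_one]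
  simp only [split] at holder
  calc (∫⁻ a, G a * W a ∂μ) ^ p
      ≤ ((∫⁻ a, G a ∂μ) ^ (1 - p⁻¹) * (∫⁻ a, G a * W a ^ p ∂μ) ^ p⁻¹) ^ p :=
        ENNReal.rpow_le_rpow holder hp0.le
    _ = (∫⁻ a, G a ∂μ) ^ (p - 1) * ∫⁻ a, G a * W a ^ p ∂μ := by
        rw [ENNReal.mul_rpow_of_nonneg _ _ hp0.le, ← ENNReal.rpow_mul, ← ENNReal.rpow_mul,
          inv_mul_cancel₀ hp0.ne', ENNReal.rpow_one, sub_mul, one_mul, inv_mul_cancel₀ hp0.ne']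

theorem lintegral_mul_div_rpow_le {G W : α → ℝ≥0∞} (hG : AEMeasurable G μ)
    (hW : AEMeasurable W μ) {D : ℝ≥0∞} (hD0 : D ≠ 0) (hD : D ≠ ∞) (hGD : ∫⁻ a, G a ∂μ ≤ D)
    {p : ℝ} (hp : 1 ≤ p) :
    ((∫⁻ a, G a * W a ∂μ) / D) ^ p ≤ (∫⁻ a, G a * W a ^ p ∂μ) / D := by
  have hp0 : 0 < p := zero_lt_one.trans_le hp
  calc ((∫⁻ a, G a * W a ∂μ) / D) ^ p
      = D ^ (-p) * (∫⁻ a, G a * W a ∂μ) ^ p := by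
        rw [div_eq_mul_inv, ENNReal.mul_rpow_of_nonneg _ _ hp0.le, ENNReal.inv_rpow,
          ENNReal.rpow_neg, mul_comm]
    _ ≤ D ^ (-p) * (D ^ (p - 1) * ∫⁻ a, G a * W a ^ p ∂μ) := by
        gcongr
        exact (lintegral_mul_rpow_le hG hW hp).trans
          (mul_le_mul_left (ENNReal.rpow_le_rpow hGD (by linarith)) _)
    _ = (∫⁻ a, G a * W a ^ p ∂μ) / D := by
        rw [← mul_assoc, ← ENNReal.rpow_add _ _ hD0 hD, show -p + (p - 1) = -1 by ring,
          ENNReal.rpow_neg_one, div_eq_mul_inv, mul_comm]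

theorem enorm_inv_smul_integral_smul_rpow_le {E : Type*} [NormedAddCommGroup E]
    [NormedSpace ℝ E] {g : α → ℝ} {V : α → E} (hg : AEMeasurable g μ) (hg0 : ∀ a, 0 ≤ g a)
    (hV : AEStronglyMeasurable V μ) {D : ℝ} (hD : 0 < D)
    (hgD : ∫⁻ a, ENNReal.ofReal (g a) ∂μ ≤ ENNReal.ofReal D) {p : ℝ} (hp : 1 ≤ p) :
    ‖D⁻¹ • ∫ a, g a • V a ∂μ‖ₑ ^ p
      ≤ (∫⁻ a, ENNReal.ofReal (g a) * ‖V a‖ₑ ^ p ∂μ) / ENNReal.ofReal D := by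
  have hnorm : ‖∫ a, g a • V a ∂μ‖ₑ ≤ ∫⁻ a, ENNReal.ofReal (g a) * ‖V a‖ₑ ∂μ := by
    refine (enorm_integral_le_lintegral_enorm _).trans_eq (lintegral_congr fun a => ?_)
    rw [enorm_smul, Real.enorm_of_nonneg (hg0 a)]
  calc ‖D⁻¹ • ∫ a, g a • V a ∂μ‖ₑ ^ p
      = (‖∫ a, g a • V a ∂μ‖ₑ / ENNReal.ofReal D) ^ p := by
        rw [enorm_smul, Real.enorm_of_nonneg (inv_nonneg.2 hD.le), ENNReal.ofReal_inv_of_pos hD,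
          ENNReal.div_eq_inv_mul]
    _ ≤ ((∫⁻ a, ENNReal.ofReal (g a) * ‖V a‖ₑ ∂μ) / ENNReal.ofReal D) ^ p := by gcongr
    _ ≤ _ := lintegral_mul_div_rpow_le hg.ennreal_ofReal hV.enorm (by simpa using hD)
        ENNReal.ofReal_ne_top hgD hp

theorem setLIntegral_div_le_inv {S : Set α} (hS : MeasurableSet S) {ρ D : α → ℝ≥0∞}
    (hρ : AEMeasurable ρ μ) {c : ℝ≥0∞} (hc0 : c ≠ 0) (hc : c ≠ ∞)
    (hD : ∀ x ∈ S, c * ∫⁻ y in S, ρ y ∂μ ≤ D x) :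
    ∫⁻ x in S, ρ x / D x ∂μ ≤ c⁻¹ := by
  set m := ∫⁻ y in S, ρ y ∂μ
  calc ∫⁻ x in S, ρ x / D x ∂μ ≤ ∫⁻ x in S, ρ x * (c * m)⁻¹ ∂μ :=
        setLIntegral_mono_ae' hS (ae_of_all _ fun x hx => by
          rw [div_eq_mul_inv]; gcongr; exact hD x hx)
    _ = m * (c * m)⁻¹ := lintegral_mul_const'' _ hρ.restrict
    _ ≤ c⁻¹ := by
        rw [ENNReal.mul_inv (Or.inl hc0) (Or.inl hc), mul_left_comm]
        exact mul_le_of_le_one_right' (ENNReal.mul_inv_le_one m)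

theorem lintegral_biUnion_finset_le {ι : Type*} (t : Finset ι) (s : ι → Set α)
    (f : α → ℝ≥0∞) : ∫⁻ a in ⋃ i ∈ t, s i, f a ∂μ ≤ ∑ i ∈ t, ∫⁻ a in s i, f a ∂μ := by
  rw [← Finset.tsum_subtype, ← Finset.set_biUnion_coe, Set.biUnion_eq_iUnion]
  exact lintegral_iUnion_le _ _

theorem lintegral_mul_lintegral_le {β : Type*} [MeasurableSpace β] {ν : Measure β} [SFinite μ]
    [SFinite ν] {g : α → ℝ≥0∞} {k : α → β → ℝ≥0∞} {F : β → ℝ≥0∞} (hg : Measurable g)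
    (hk : Measurable (Function.uncurry k)) (hF : Measurable F) {K : ℝ≥0∞}
    (hK : ∀ b, ∫⁻ a, g a * k a b ∂μ ≤ K) :
    ∫⁻ a, g a * ∫⁻ b, k a b * F b ∂ν ∂μ ≤ K * ∫⁻ b, F b ∂ν := by
  have hH : Measurable fun z : α × β => g z.1 * k z.1 z.2 * F z.2 :=
    ((hg.comp measurable_fst).mul hk).mul (hF.comp measurable_snd)
  calc ∫⁻ a, g a * ∫⁻ b, k a b * F b ∂ν ∂μ
      = ∫⁻ a, ∫⁻ b, g a * k a b * F b ∂ν ∂μ := lintegral_congr fun a => by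
        rw [← lintegral_const_mul (f := fun b => k a b * F b) _
          ((hk.comp measurable_prodMk_left).mul hF)]
        simp only [mul_assoc]
    _ = ∫⁻ b, ∫⁻ a, g a * k a b * F b ∂μ ∂ν := lintegral_lintegral_swap hH.aemeasurable
    _ = ∫⁻ b, (∫⁻ a, g a * k a b ∂μ) * F b ∂ν := lintegral_congr fun b =>
        lintegral_mul_const _ (hg.mul (hk.comp measurable_prodMk_right))
    _ ≤ ∫⁻ b, K * F b ∂ν := by gcongr with b; exact hK b
    _ = K * ∫⁻ b, F b ∂ν := lintegral_const_mul K hF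

end MeasureSpace

section NormedGroup

variable {E : Type*} [NormedAddCommGroup E] [MeasurableSpace E] [OpensMeasurableSpace E]
  {μ : Measure E}

theorem mul_setLIntegral_ball_le_lintegral {φ ρ : E → ℝ≥0∞} {r : ℝ} {c : ℝ≥0∞}
    (hφ : ∀ x, ‖x‖ ≤ r → c ≤ φ x) {x z : E} (hx : x ∈ Metric.ball z (r / 2)) :
    c * ∫⁻ y in Metric.ball z (r / 2), ρ y ∂μ ≤ ∫⁻ y, φ (x - y) * ρ y ∂μ := by
  refine (lintegral_const_mul_le _ _).trans <|
    le_trans ?_ (setLIntegral_le_lintegral (Metric.ball z (r / 2)) _)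
  refine setLIntegral_mono_ae' measurableSet_ball (ae_of_all _ fun y hy => ?_)
  gcongr
  apply hφ
  rw [← dist_eq_norm]
  linarith [dist_triangle_right x y z, Metric.mem_ball.1 hx, Metric.mem_ball.1 hy]

theorem lintegral_div_mul_sub_le_of_cover {φ ρ D : E → ℝ≥0∞} {r₁ r₂ : ℝ} {c M : ℝ≥0∞}
    {t : Finset E} (hρ : AEMeasurable ρ μ) (hc0 : c ≠ 0) (hc : c ≠ ∞) (hM : M ≠ ∞)
    (hφc : ∀ x, ‖x‖ ≤ r₁ → c ≤ φ x) (hφM : ∀ x, φ x ≤ M) (hφ : ∀ x, r₂ < ‖x‖ → φ x = 0)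
    (ht : Metric.closedBall 0 r₂ ⊆ ⋃ z ∈ t, Metric.ball z (r₁ / 2))
    (hD : ∀ x, ∫⁻ y, φ (x - y) * ρ y ∂μ ≤ D x) (y : E) :
    ∫⁻ x, ρ x / D x * φ (x - y) ∂μ ≤ M * t.card / c := by
  have hcover : Metric.closedBall y r₂ ⊆ ⋃ z ∈ t, Metric.ball (y + z) (r₁ / 2) := by
    intro x hx
    obtain ⟨z, hz, hxz⟩ := Set.mem_iUnion₂.1 (ht (by simpa [dist_eq_norm] using hx))
    refine Set.mem_iUnion₂.2 ⟨z, hz, ?_⟩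
    simpa [dist_eq_norm, sub_add_eq_sub_sub] using hxz
  have hsupp : (fun x => ρ x / D x * φ (x - y)).support ⊆ Metric.closedBall y r₂ := by
    intro x hx
    by_contra hxy
    rw [Metric.mem_closedBall, dist_eq_norm, not_le] at hxy
    simp [hφ _ hxy] at hx
  calc ∫⁻ x, ρ x / D x * φ (x - y) ∂μ
      = ∫⁻ x in Metric.closedBall y r₂, ρ x / D x * φ (x - y) ∂μ :=
        (setLIntegral_eq_of_support_subset hsupp).symm
    _ ≤ ∫⁻ x in Metric.closedBall y r₂, ρ x / D x * M ∂μ := by gcongr; exact hφM _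
    _ = (∫⁻ x in Metric.closedBall y r₂, ρ x / D x ∂μ) * M := lintegral_mul_const' _ _ hM
    _ ≤ (∑ z ∈ t, ∫⁻ x in Metric.ball (y + z) (r₁ / 2), ρ x / D x ∂μ) * M := by
        gcongr
        exact (lintegral_mono_set hcover).trans (lintegral_biUnion_finset_le _ _ _)
    _ ≤ (∑ _z ∈ t, c⁻¹) * M := by
        gcongr with z
        exact setLIntegral_div_le_inv measurableSet_ball hρ hc0 hc fun x hx =>
          (mul_setLIntegral_ball_le_lintegral hφc hx).trans (hD x)
    _ = M * t.card / c := by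
        rw [Finset.sum_const, nsmul_eq_mul, div_eq_mul_inv, mul_comm, mul_assoc]

end NormedGroup

noncomputable def spatialDensity {d : ℕ} (f : Euc d × Euc d → ℝ) (x : Euc d) : ℝ≥0∞ :=
  ∫⁻ v, ENNReal.ofReal (f (x, v))

section LocalAverage

variable {d : ℕ} {φ : Euc d → ℝ} {f : Euc d × Euc d → ℝ}

theorem measurable_spatialDensity (hf : Measurable f) : Measurable (spatialDensity f) :=
  hf.ennreal_ofReal.lintegral_prod_right'

theorem integrable_comp_sub_fst_mul (hφ : Measurable φ) (hφ0 : ∀ x, 0 ≤ φ x) {M : ℝ}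
    (hφM : ∀ x, φ x ≤ M) (hfi : Integrable f) (x : Euc d) :
    Integrable fun ζ : Euc d × Euc d => φ (x - ζ.1) * f ζ :=
  hfi.bdd_mul (c := M) (hφ.comp (measurable_const.sub measurable_fst)).aestronglyMeasurable
    (ae_of_all _ fun ζ => by rw [Real.norm_of_nonneg (hφ0 _)]; exact hφM _)

theorem ofReal_integral_comp_sub_fst_mul (hφ : Measurable φ) (hφ0 : ∀ x, 0 ≤ φ x) {M : ℝ}
    (hφM : ∀ x, φ x ≤ M) (hf : Measurable f) (hf0 : ∀ z, 0 ≤ f z) (hfi : Integrable f)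
    (x : Euc d) :
    ENNReal.ofReal (∫ ζ, φ (x - ζ.1) * f ζ)
      = ∫⁻ y, ENNReal.ofReal (φ (x - y)) * spatialDensity f y := by
  rw [ofReal_integral_eq_lintegral_ofReal (integrable_comp_sub_fst_mul hφ hφ0 hφM hfi x)
    (ae_of_all _ fun ζ => mul_nonneg (hφ0 _) (hf0 ζ)), Measure.volume_eq_prod,
    lintegral_prod _ (by fun_prop)]
  refine lintegral_congr fun y => ?_
  rw [spatialDensity, ← lintegral_const_mul _ (by fun_prop)]
  exact lintegral_congr fun v => ENNReal.ofReal_mul (hφ0 _)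

theorem enorm_uReg_rpow_le {R : ℝ} (hR : 0 < R) (hφ : Measurable φ) (hφ0 : ∀ x, 0 ≤ φ x)
    {M : ℝ} (hφM : ∀ x, φ x ≤ M) {θR : Euc d → Euc d} (hθ : Measurable θR)
    (hθR : ∀ w, ‖θR w‖ ≤ ‖w‖) (hf : Measurable f) (hf0 : ∀ z, 0 ≤ f z) (hfi : Integrable f)
    {p : ℝ} (hp : 1 ≤ p) (x : Euc d) :
    ‖uReg d R φ θR f x‖ₑ ^ p
      ≤ (∫⁻ ζ, ENNReal.ofReal (φ (x - ζ.1)) * ENNReal.ofReal (‖ζ.2‖ ^ p * f ζ)) /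
        (ENNReal.ofReal R⁻¹ + ∫⁻ y, ENNReal.ofReal (φ (x - y)) * spatialDensity f y) := by
  have hg0 : ∀ ζ : Euc d × Euc d, 0 ≤ φ (x - ζ.1) * f ζ := fun ζ => mul_nonneg (hφ0 _) (hf0 ζ)
  rw [← ofReal_integral_comp_sub_fst_mul hφ hφ0 hφM hf hf0 hfi,
    ← ENNReal.ofReal_add (inv_nonneg.2 hR.le) (integral_nonneg hg0)]
  refine (enorm_inv_smul_integral_smul_rpow_le (by fun_prop) hg0
    (hθ.comp measurable_snd).aestronglyMeasurable
    (add_pos_of_pos_of_nonneg (inv_pos.2 hR) (integral_nonneg hg0)) ?_ hp).trans ?_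
  · rw [← ofReal_integral_eq_lintegral_ofReal (integrable_comp_sub_fst_mul hφ hφ0 hφM hfi x)
      (ae_of_all _ hg0)]
    exact ENNReal.ofReal_le_ofReal (le_add_of_nonneg_left (inv_nonneg.2 hR.le))
  · gcongr ?_ / _
    refine lintegral_mono fun ζ => ?_
    rw [ENNReal.ofReal_mul (hφ0 _), ENNReal.ofReal_mul (by positivity),
      ← ENNReal.ofReal_rpow_of_nonneg (norm_nonneg _) (by linarith), ofReal_norm, mul_assoc,
      mul_comm (‖ζ.2‖ₑ ^ p)]
    gcongr
    exact enorm_le_iff_norm_le.2 (hθR ζ.2)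

theorem lintegral_uReg_rpow_mul_le {R : ℝ} (hR : 0 < R) (hφ : Measurable φ)
    (hφ0 : ∀ x, 0 ≤ φ x) {M : ℝ} (hφM : ∀ x, φ x ≤ M) {θR : Euc d → Euc d} (hθ : Measurable θR)
    (hθR : ∀ w, ‖θR w‖ ≤ ‖w‖) (hf : Measurable f) (hf0 : ∀ z, 0 ≤ f z) (hfi : Integrable f)
    {p : ℝ} (hp : 1 ≤ p) :
    ∫⁻ z, ENNReal.ofReal (‖uReg d R φ θR f z.1‖ ^ p * f z)
      ≤ ∫⁻ x, spatialDensity f x /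
          (ENNReal.ofReal R⁻¹ + ∫⁻ y, ENNReal.ofReal (φ (x - y)) * spatialDensity f y) *
          ∫⁻ ζ, ENNReal.ofReal (φ (x - ζ.1)) * ENNReal.ofReal (‖ζ.2‖ ^ p * f ζ) :=
  calc ∫⁻ z, ENNReal.ofReal (‖uReg d R φ θR f z.1‖ ^ p * f z)
      = ∫⁻ z, ‖uReg d R φ θR f z.1‖ₑ ^ p * ENNReal.ofReal (f z) := lintegral_congr fun z => by
        rw [ENNReal.ofReal_mul (by positivity), ← ENNReal.ofReal_rpow_of_nonneg (norm_nonneg _)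
          (by linarith), ofReal_norm]
    _ ≤ ∫⁻ x, ‖uReg d R φ θR f x‖ₑ ^ p * spatialDensity f x := by
        rw [Measure.volume_eq_prod]
        exact (lintegral_prod_le _).trans_eq (lintegral_congr fun x => by
          rw [spatialDensity, ← lintegral_const_mul _ (by fun_prop)])
    _ ≤ _ := lintegral_mono fun x =>
        (mul_le_mul_left (enorm_uReg_rpow_le hR hφ hφ0 hφM hθ hθR hf hf0 hfi hp x) _).trans_eq
          (by simp only [div_eq_mul_inv]; ring)

end LocalAverage

theorem stmt1_general (d : ℕ) (r₁ r₂ : ℝ) (hr₁ : 0 < r₁)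
    (φ : Euc d → ℝ) (hφmeas : Measurable φ) (hφnonneg : ∀ x, 0 ≤ φ x)
    (hφbdd : ∃ M : ℝ, ∀ x, φ x ≤ M)
    (hφinf : ∃ c : ℝ, 0 < c ∧ ∀ x, ‖x‖ ≤ r₁ → c ≤ φ x)
    (hφsupp : ∀ x, r₂ < ‖x‖ → φ x = 0) :
    ∃ C : ℝ, ∀ R : ℝ, 0 < R → ∀ θR : Euc d → Euc d, Measurable θR →
      (∀ w, ‖θR w‖ ≤ ‖w‖) →
      ∀ p : ℝ, 1 ≤ p →
      ∀ f : Euc d × Euc d → ℝ, Measurable f → (∀ z, 0 ≤ f z) → Integrable f →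
      (∫⁻ z : Euc d × Euc d, ENNReal.ofReal (‖z.2‖ ^ p * f z)) < ⊤ →
      (∫⁻ z : Euc d × Euc d, ENNReal.ofReal (‖uReg d R φ θR f z.1‖ ^ p * f z))
        ≤ ENNReal.ofReal C *
          ∫⁻ z : Euc d × Euc d, ENNReal.ofReal (‖z.2‖ ^ p * f z) := by
  obtain ⟨M, hM⟩ := hφbdd
  obtain ⟨c, hc, hcφ⟩ := hφinf
  obtain ⟨t, ht⟩ : ∃ t : Finset (Euc d),
      Metric.closedBall 0 r₂ ⊆ ⋃ z ∈ t, Metric.ball z (r₁ / 2) :=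
    (isCompact_closedBall 0 r₂).elim_finite_subcover _ (fun _ => Metric.isOpen_ball)
      fun x _ => Set.mem_iUnion.2 ⟨x, Metric.mem_ball_self (by positivity)⟩
  refine ⟨M * t.card / c, fun R hR θR hθ hθR p hp f hf hf0 hfi _ => ?_⟩
  have hρ := measurable_spatialDensity hf
  have hk : Measurable fun xy : Euc d × Euc d => ENNReal.ofReal (φ (xy.1 - xy.2)) := by fun_prop
  have hden : Measurable fun x =>
      ENNReal.ofReal R⁻¹ + ∫⁻ y, ENNReal.ofReal (φ (x - y)) * spatialDensity f y :=
    measurable_const.add (hk.mul (hρ.comp measurable_snd)).lintegral_prod_right'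
  refine (lintegral_uReg_rpow_mul_le hR hφmeas hφnonneg hM hθ hθR hf hf0 hfi hp).trans <|
    lintegral_mul_lintegral_le
      (k := fun (x : Euc d) (ζ : Euc d × Euc d) => ENNReal.ofReal (φ (x - ζ.1))) (hρ.div hden)
      (hk.comp (measurable_fst.prodMk measurable_snd.fst)) (by fun_prop) fun ζ => ?_
  rw [ENNReal.ofReal_div_of_pos hc, ENNReal.ofReal_mul ((hφnonneg 0).trans (hM 0)),
    ENNReal.ofReal_natCast]
  exact lintegral_div_mul_sub_le_of_cover hρ.aemeasurable (by simpa using hc)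
    ENNReal.ofReal_ne_top ENNReal.ofReal_ne_top (fun x hx => ENNReal.ofReal_le_ofReal (hcφ x hx))
    (fun x => ENNReal.ofReal_le_ofReal (hM x)) (fun x hx => by simp [hφsupp x hx]) ht
    (fun x => le_add_self) ζ.1

/-- Proposition `ineq_u`: there is a constant `C = C(d, φ)`, independent of
`R`, `θ_R`, `p` and `f`, such that `∫ |u_R[f](x)|^p f(x,v) dz ≤ C ∫ |v|^p f(x,v) dz`. -/
theorem stmt1 (d : ℕ) (hd : 1 ≤ d) (r₁ r₂ : ℝ) (hr₁ : 0 < r₁) (hr₁₂ : r₁ < r₂)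
    (φ : Euc d → ℝ) (hφmeas : Measurable φ) (hφnonneg : ∀ x, 0 ≤ φ x)
    (hφbdd : ∃ M : ℝ, ∀ x, φ x ≤ M)
    (hφinf : ∃ c : ℝ, 0 < c ∧ ∀ x, ‖x‖ ≤ r₁ → c ≤ φ x)
    (hφsupp : ∀ x, r₂ < ‖x‖ → φ x = 0) :
    ∃ C : ℝ, ∀ R : ℝ, 0 < R → ∀ θR : Euc d → Euc d, Measurable θR →
      (∀ w, ‖θR w‖ ≤ ‖w‖) →
      ∀ p : ℝ, 1 ≤ p →
      ∀ f : Euc d × Euc d → ℝ, Measurable f → (∀ z, 0 ≤ f z) → Integrable f →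
      (∫⁻ z : Euc d × Euc d, ENNReal.ofReal (‖z.2‖ ^ p * f z)) < ⊤ →
      (∫⁻ z : Euc d × Euc d, ENNReal.ofReal (‖uReg d R φ θR f z.1‖ ^ p * f z))
        ≤ ENNReal.ofReal C *
          ∫⁻ z : Euc d × Euc d, ENNReal.ofReal (‖z.2‖ ^ p * f z) :=
  stmt1_general d r₁ r₂ hr₁ φ hφmeas hφnonneg hφbdd hφinf hφsupp
end

section
/- Let d ≥ 1, let G : ℝ^d → ℝ be bounded by M and Lipschitz with constant L, and let θ : ℝ^d → ℝ^d be bounded by M and Lipschitz with constant L. Then there exists C depending only on M and L such that for all z = (x,v), z' = (x',v') in ℝ^d × ℝ^d, all probability measures μ, ν on ℝ^d × ℝ^d, and every coupling π of μ and ν (i.e. a probability measure on (ℝ^{2d})² whose first marginal is μ and second marginal is ν), one has | ∫ G(x−y) θ(w−v) dμ(y,w) − ∫ G(x'−y) θ(w−v') dν(y,w) | ≤ C ( |z−z'| + ∫ |ζ₁ − ζ₂| dπ(ζ₁,ζ₂) ). -/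
/-!
Transport both integrals to the coupling `π`: the difference becomes
`∫ (K z ζ₁ - K z' ζ₂) dπ` for the kernel `K (x, v) (y, w) = G (x - y) • θ (w - v)`.
Writing `g • t - g' • t' = g • (t - t') + (g - g') • t'` shows that `K` is jointly Lipschitz
with constant `2 M L`, which bounds the integrand by `2 M L (|z - z'| + |ζ₁ - ζ₂|)`.
-/

open MeasureTheory
open scoped ENNReal NNReal

lemma norm_smul_sub_smul_le_of_lipschitzWith {E E' F : Type*} [SeminormedAddCommGroup E]
    [SeminormedAddCommGroup E'] [SeminormedAddCommGroup F] [NormedSpace ℝ F]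
    {M : ℝ} {L : ℝ≥0} {G : E → ℝ} {θ : E' → F}
    (hGb : ∀ a, |G a| ≤ M) (hGl : LipschitzWith L G)
    (hθb : ∀ b, ‖θ b‖ ≤ M) (hθl : LipschitzWith L θ) (a a' : E) (b b' : E') :
    ‖G a • θ b - G a' • θ b'‖ ≤ M * L * (‖a - a'‖ + ‖b - b'‖) := by
  have hM : 0 ≤ M := (abs_nonneg _).trans (hGb a)
  calc ‖G a • θ b - G a' • θ b'‖
      = ‖G a • (θ b - θ b') + (G a - G a') • θ b'‖ := by congr 1; module
    _ ≤ |G a| * ‖θ b - θ b'‖ + |G a - G a'| * ‖θ b'‖ := by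
        simpa only [norm_smul, Real.norm_eq_abs] using
          norm_add_le (G a • (θ b - θ b')) ((G a - G a') • θ b')
    _ ≤ M * (L * ‖b - b'‖) + L * ‖a - a'‖ * M := by
        gcongr
        · exact hGb a
        · exact hθl.norm_sub_le b b'
        · exact hGl.norm_sub_le a a'
        · exact hθb b'
    _ = M * L * (‖a - a'‖ + ‖b - b'‖) := by ring

lemma norm_sub_sub_sub_le_norm_add_norm {E : Type*} [SeminormedAddCommGroup E] (a b c e : E) :
    ‖(a - b) - (c - e)‖ ≤ ‖a - c‖ + ‖b - e‖ := by
  rw [sub_sub_sub_comm]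
  exact norm_sub_le _ _

section AlignmentKernel

variable {E F : Type*} [SeminormedAddCommGroup E] [NormedAddCommGroup F] [NormedSpace ℝ F]

def alignmentKernel (G : E → ℝ) (θ : E → F) (z ζ : E × E) : F :=
  G (z.1 - ζ.1) • θ (ζ.2 - z.2)

variable {M : ℝ} {L : ℝ≥0} {G : E → ℝ} {θ : E → F}

lemma norm_alignmentKernel_sub_le (hGb : ∀ a, |G a| ≤ M) (hGl : LipschitzWith L G)
    (hθb : ∀ b, ‖θ b‖ ≤ M) (hθl : LipschitzWith L θ) (z z' ζ ζ' : E × E) :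
    ‖alignmentKernel G θ z ζ - alignmentKernel G θ z' ζ'‖ ≤
      2 * M * L * (‖z - z'‖ + ‖ζ - ζ'‖) := by
  have hML : 0 ≤ M * L := mul_nonneg ((abs_nonneg _).trans (hGb 0)) L.coe_nonneg
  have hx : ‖(z.1 - ζ.1) - (z'.1 - ζ'.1)‖ ≤ ‖z - z'‖ + ‖ζ - ζ'‖ :=
    (norm_sub_sub_sub_le_norm_add_norm _ _ _ _).trans
      (add_le_add (norm_fst_le (z - z')) (norm_fst_le (ζ - ζ')))
  have hv : ‖(ζ.2 - z.2) - (ζ'.2 - z'.2)‖ ≤ ‖z - z'‖ + ‖ζ - ζ'‖ :=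
    (norm_sub_sub_sub_le_norm_add_norm _ _ _ _).trans
      (add_comm ‖z - z'‖ _ ▸ add_le_add (norm_snd_le (ζ - ζ')) (norm_snd_le (z - z')))
  calc _ ≤ M * L * (‖(z.1 - ζ.1) - (z'.1 - ζ'.1)‖ + ‖(ζ.2 - z.2) - (ζ'.2 - z'.2)‖) :=
        norm_smul_sub_smul_le_of_lipschitzWith hGb hGl hθb hθl _ _ _ _
    _ ≤ M * L * ((‖z - z'‖ + ‖ζ - ζ'‖) + (‖z - z'‖ + ‖ζ - ζ'‖)) := by gcongr
    _ = 2 * M * L * (‖z - z'‖ + ‖ζ - ζ'‖) := by ring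

lemma integrable_alignmentKernel [MeasurableSpace E] [BorelSpace E] [SecondCountableTopology E]
    (hGb : ∀ a, |G a| ≤ M) (hGl : LipschitzWith L G)
    (hθb : ∀ b, ‖θ b‖ ≤ M) (hθl : LipschitzWith L θ) (z : E × E)
    (μ : Measure (E × E)) [IsFiniteMeasure μ] :
    Integrable (alignmentKernel G θ z) μ := by
  have hcont : Continuous (alignmentKernel G θ z) := by
    have := hGl.continuous
    have := hθl.continuous
    unfold alignmentKernel
    fun_prop
  refine .of_bound hcont.aestronglyMeasurable (M * M) (.of_forall fun ζ => ?_)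
  rw [alignmentKernel, norm_smul, Real.norm_eq_abs]
  exact mul_le_mul (hGb _) (hθb _) (norm_nonneg _) ((abs_nonneg _).trans (hGb 0))

end AlignmentKernel

lemma enorm_integral_sub_integral_le_of_coupling {X F : Type*} [MeasurableSpace X]
    [NormedAddCommGroup F] [NormedSpace ℝ F] {μ ν : Measure X} {π : Measure (X × X)}
    (hμ : π.map Prod.fst = μ) (hν : π.map Prod.snd = ν) {f g : X → F}
    (hf : Integrable f μ) (hg : Integrable g ν) :
    ‖∫ x, f x ∂μ - ∫ x, g x ∂ν‖ₑ ≤ ∫⁻ p, ‖f p.1 - g p.2‖ₑ ∂π := by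
  subst hμ hν
  have hf' : Integrable (fun p : X × X => f p.1) π := hf.comp_measurable measurable_fst
  have hg' : Integrable (fun p : X × X => g p.2) π := hg.comp_measurable measurable_snd
  rw [integral_map measurable_fst.aemeasurable hf.aestronglyMeasurable,
    integral_map measurable_snd.aemeasurable hg.aestronglyMeasurable, ← integral_sub hf' hg']
  exact enorm_integral_le_lintegral_enorm _

theorem stmt4_general (d : ℕ) (M : ℝ) (L : ℝ≥0) :
    ∃ C : ℝ, 0 < C ∧ ∀ G : Euc d → ℝ, (∀ x, |G x| ≤ M) → LipschitzWith L G →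
      ∀ θ : Euc d → Euc d, (∀ x, ‖θ x‖ ≤ M) → LipschitzWith L θ →
      ∀ x v x' v' : Euc d,
      ∀ μ ν : Measure (Euc d × Euc d), IsProbabilityMeasure μ → IsProbabilityMeasure ν →
      ∀ π : Measure ((Euc d × Euc d) × (Euc d × Euc d)), IsProbabilityMeasure π →
        π.map Prod.fst = μ → π.map Prod.snd = ν →
        ENNReal.ofReal
            ‖(∫ ζ : Euc d × Euc d, G (x - ζ.1) • θ (ζ.2 - v) ∂μ) -
              ∫ ζ : Euc d × Euc d, G (x' - ζ.1) • θ (ζ.2 - v') ∂ν‖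
          ≤ ENNReal.ofReal C *
            (ENNReal.ofReal ‖((x, v) : Euc d × Euc d) - ((x', v') : Euc d × Euc d)‖ +
              ∫⁻ ζ : (Euc d × Euc d) × (Euc d × Euc d),
                ENNReal.ofReal ‖ζ.1 - ζ.2‖ ∂π) := by
  refine ⟨2 * |M| * L + 1, by positivity, ?_⟩
  intro G hGb hGl θ hθb hθl x v x' v' μ ν _ _ π _ hμ hν
  have hC : 2 * M * L ≤ 2 * |M| * L + 1 := by
    have := mul_le_mul_of_nonneg_right (le_abs_self M) L.coe_nonneg
    linarith
  set z : Euc d × Euc d := (x, v)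
  set z' : Euc d × Euc d := (x', v')
  have hpt : ∀ p : (Euc d × Euc d) × (Euc d × Euc d),
      ‖alignmentKernel G θ z p.1 - alignmentKernel G θ z' p.2‖ₑ ≤
        ENNReal.ofReal (2 * |M| * L + 1) *
          (ENNReal.ofReal ‖z - z'‖ + ENNReal.ofReal ‖p.1 - p.2‖) := fun p => by
    rw [← ofReal_norm, ← ENNReal.ofReal_add (norm_nonneg _) (norm_nonneg _),
      ← ENNReal.ofReal_mul (by positivity)]
    exact ENNReal.ofReal_le_ofReal
      ((norm_alignmentKernel_sub_le hGb hGl hθb hθl _ _ _ _).trans (by gcongr))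
  calc _ = ‖∫ ζ, alignmentKernel G θ z ζ ∂μ - ∫ ζ, alignmentKernel G θ z' ζ ∂ν‖ₑ :=
        ofReal_norm _
    _ ≤ ∫⁻ p, ‖alignmentKernel G θ z p.1 - alignmentKernel G θ z' p.2‖ₑ ∂π :=
        enorm_integral_sub_integral_le_of_coupling hμ hν
          (integrable_alignmentKernel hGb hGl hθb hθl z μ)
          (integrable_alignmentKernel hGb hGl hθb hθl z' ν)
    _ ≤ _ := lintegral_mono hpt
    _ = _ := by
        rw [lintegral_const_mul' _ _ ENNReal.ofReal_ne_top, lintegral_add_left measurable_const,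
          lintegral_const, measure_univ, mul_one]

/-- global Lipschitz estimate for the regularized Cucker–Smale coefficient:
for `G` bounded Lipschitz (scalar) and `θ` bounded Lipschitz (vector), there is
`C = C(M, L)` such that for all `z = (x,v)`, `z' = (x',v')`, all probability measures
`μ, ν` and every coupling `π` of `μ` and `ν`,
`| ∫ G(x−y) θ(w−v) dμ − ∫ G(x'−y) θ(w−v') dν | ≤ C (|z−z'| + ∫ |ζ₁−ζ₂| dπ)`. -/
theorem stmt4 (d : ℕ) (hd : 1 ≤ d) (M : ℝ) (L : ℝ≥0) :
    ∃ C : ℝ, 0 < C ∧ ∀ G : Euc d → ℝ, (∀ x, |G x| ≤ M) → LipschitzWith L G →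
      ∀ θ : Euc d → Euc d, (∀ x, ‖θ x‖ ≤ M) → LipschitzWith L θ →
      ∀ x v x' v' : Euc d,
      ∀ μ ν : Measure (Euc d × Euc d), IsProbabilityMeasure μ → IsProbabilityMeasure ν →
      ∀ π : Measure ((Euc d × Euc d) × (Euc d × Euc d)), IsProbabilityMeasure π →
        π.map Prod.fst = μ → π.map Prod.snd = ν →
        ENNReal.ofReal
            ‖(∫ ζ : Euc d × Euc d, G (x - ζ.1) • θ (ζ.2 - v) ∂μ) -
              ∫ ζ : Euc d × Euc d, G (x' - ζ.1) • θ (ζ.2 - v') ∂ν‖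
          ≤ ENNReal.ofReal C *
            (ENNReal.ofReal ‖((x, v) : Euc d × Euc d) - ((x', v') : Euc d × Euc d)‖ +
              ∫⁻ ζ : (Euc d × Euc d) × (Euc d × Euc d),
                ENNReal.ofReal ‖ζ.1 - ζ.2‖ ∂π) :=
  stmt4_general d M L
end

section
/- Let d ≥ 1 and R > 0. Let φ : ℝ^d → [0,∞) be bounded by M_φ and Lipschitz with constant L_φ, and let θ_R : ℝ^d → ℝ^d be bounded by M_θ and Lipschitz with constant L_θ. For a probability measure μ on ℝ^d × ℝ^d define u_R[μ](x) = (∫ φ(x−y) θ_R(w) dμ(y,w)) / (R^{−1} + ∫ φ(x−y) dμ(y,w)). Then there exists C depending only on R, M_φ, L_φ, M_θ, L_θ such that for all x, x' ∈ ℝ^d, all probability measures μ, ν on ℝ^d × ℝ^d, and every coupling π of μ and ν, one has | u_R[μ](x) − u_R[ν](x') | ≤ C ( |x−x'| + ∫ |ζ₁ − ζ₂| dπ(ζ₁,ζ₂) ). -/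
/-!
Transport both local averages to the coupling `π`: the numerators and denominators of
`u_R[μ](x)` and `u_R[ν](x')` become `π`-integrals of integrands that are Lipschitz in the pair
of points, so they differ by at most a constant times `|x - x'| + ∫ |ζ₁ - ζ₂| dπ`. The
regularization keeps both denominators above `R⁻¹`, so the quotient map is Lipschitz in its
numerator and denominator with constants depending only on `R`, `M_φ` and `M_θ`.
-/

open MeasureTheory
open scoped ENNReal NNReal

/-- The regularized Motsch–Tadmor local average velocity of a probability measure `μ`:
`u_R[μ](x) = (∫ φ(x−y) θ_R(w) dμ(y,w)) / (R⁻¹ + ∫ φ(x−y) dμ(y,w))`. -/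
noncomputable def uRegMeas (d : ℕ) (R : ℝ) (φ : Euc d → ℝ) (θR : Euc d → Euc d)
    (μ : Measure (Euc d × Euc d)) (x : Euc d) : Euc d :=
  (R⁻¹ + ∫ ζ : Euc d × Euc d, φ (x - ζ.1) ∂μ)⁻¹ •
    ∫ ζ : Euc d × Euc d, φ (x - ζ.1) • θR ζ.2 ∂μ

theorem norm_integral_sub_integral_le_of_coupling {X G : Type*} [MeasurableSpace X]
    [SeminormedAddCommGroup X] [NormedAddCommGroup G] [NormedSpace ℝ G]
    {μ ν : Measure X} {π : Measure (X × X)} [IsProbabilityMeasure π]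
    (hπμ : π.map Prod.fst = μ) (hπν : π.map Prod.snd = ν) {f g : X → G}
    (hf : Integrable f μ) (hg : Integrable g ν)
    (hI : Integrable (fun p : X × X => ‖p.1 - p.2‖) π) {K c : ℝ}
    (hfg : ∀ p q, ‖f p - g q‖ ≤ K * (c + ‖p - q‖)) :
    ‖∫ p, f p ∂μ - ∫ q, g q ∂ν‖ ≤ K * (c + ∫ p, ‖p.1 - p.2‖ ∂π) := by
  subst hπμ hπν
  have hf' : Integrable (fun p : X × X => f p.1) π := hf.comp_measurable measurable_fst
  have hg' : Integrable (fun p : X × X => g p.2) π := hg.comp_measurable measurable_snd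
  rw [integral_map measurable_fst.aemeasurable hf.aestronglyMeasurable,
    integral_map measurable_snd.aemeasurable hg.aestronglyMeasurable, ← integral_sub hf' hg']
  calc _ ≤ ∫ p, K * (c + ‖p.1 - p.2‖) ∂π :=
        norm_integral_le_of_norm_le (((integrable_const c).add hI).const_mul K)
          (ae_of_all _ fun p => hfg p.1 p.2)
    _ = K * (c + ∫ p, ‖p.1 - p.2‖ ∂π) := by
        rw [integral_const_mul, integral_add (integrable_const c) hI, integral_const]
        simp

theorem norm_inv_add_smul_sub_inv_add_smul_le {E : Type*} [NormedAddCommGroup E]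
    [NormedSpace ℝ E] {r A A' K : ℝ} {B B' : E} (hr : 0 < r) (hA : 0 ≤ A) (hA' : 0 ≤ A')
    (hB' : ‖B'‖ ≤ K) :
    ‖(r + A)⁻¹ • B - (r + A')⁻¹ • B'‖ ≤ r⁻¹ * ‖B - B'‖ + r⁻¹ ^ 2 * K * |A - A'| := by
  have hpos : ∀ {a : ℝ}, 0 ≤ a → 0 < r + a := fun ha => by positivity
  have hinv : ∀ {a : ℝ}, 0 ≤ a → (r + a)⁻¹ ≤ r⁻¹ := fun ha =>
    inv_anti₀ hr (le_add_of_nonneg_right ha)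
  have hdiff : |(r + A)⁻¹ - (r + A')⁻¹| ≤ r⁻¹ ^ 2 * |A - A'| := by
    have heq : (r + A)⁻¹ - (r + A')⁻¹ = (A' - A) * ((r + A)⁻¹ * (r + A')⁻¹) := by
      field_simp [(hpos hA).ne', (hpos hA').ne']
      ring
    have hprod : 0 < (r + A)⁻¹ * (r + A')⁻¹ := mul_pos (inv_pos.2 (hpos hA)) (inv_pos.2 (hpos hA'))
    rw [heq, abs_mul, abs_sub_comm, abs_of_pos hprod, mul_comm, sq]
    exact mul_le_mul_of_nonneg_right
      (mul_le_mul (hinv hA) (hinv hA') (inv_pos.2 (hpos hA')).le (inv_nonneg.2 hr.le))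
      (abs_nonneg _)
  calc ‖(r + A)⁻¹ • B - (r + A')⁻¹ • B'‖
      = ‖(r + A)⁻¹ • (B - B') + ((r + A)⁻¹ - (r + A')⁻¹) • B'‖ := by congr 1; module
    _ ≤ (r + A)⁻¹ * ‖B - B'‖ + |(r + A)⁻¹ - (r + A')⁻¹| * ‖B'‖ := by
        refine (norm_add_le _ _).trans_eq ?_
        rw [norm_smul, norm_smul, Real.norm_eq_abs, Real.norm_eq_abs,
          abs_of_pos (inv_pos.2 (hpos hA))]
    _ ≤ r⁻¹ * ‖B - B'‖ + r⁻¹ ^ 2 * |A - A'| * K := by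
        have hsq : 0 ≤ r⁻¹ ^ 2 * |A - A'| := by positivity
        exact add_le_add (mul_le_mul_of_nonneg_right (hinv hA) (norm_nonneg _))
          (mul_le_mul hdiff hB' (norm_nonneg _) hsq)
    _ = r⁻¹ * ‖B - B'‖ + r⁻¹ ^ 2 * K * |A - A'| := by ring

theorem norm_smul_le_mul {G : Type*} [NormedAddCommGroup G] [NormedSpace ℝ G] {a M K : ℝ}
    {v : G} (ha : 0 ≤ a) (haM : a ≤ M) (hv : ‖v‖ ≤ K) : ‖a • v‖ ≤ M * K := by
  rw [norm_smul, Real.norm_of_nonneg ha]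
  exact mul_le_mul haM hv (norm_nonneg _) (ha.trans haM)

theorem integrable_comp_sub_fst {E F : Type*} [NormedAddCommGroup E] [MeasurableSpace E]
    [OpensMeasurableSpace E] [MeasurableSpace F] {μ : Measure (E × F)} [IsFiniteMeasure μ]
    {φ : E → ℝ} {Mφ : ℝ} (hφ0 : ∀ z, 0 ≤ φ z) (hφM : ∀ z, φ z ≤ Mφ) (hφ : Continuous φ)
    (x : E) : Integrable (fun ζ : E × F => φ (x - ζ.1)) μ :=
  .of_bound ((hφ.comp (continuous_sub_left x)).stronglyMeasurable.comp_measurable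
      measurable_fst).aestronglyMeasurable Mφ
    (ae_of_all _ fun _ => by rw [Real.norm_of_nonneg (hφ0 _)]; exact hφM _)

section LipschitzWeight

variable {E F G : Type*} [NormedAddCommGroup E] [NormedAddCommGroup F] [NormedAddCommGroup G]
  [NormedSpace ℝ G] {φ : E → ℝ} {θ : F → G} {Mφ Mθ : ℝ} {Lφ Lθ : ℝ≥0}

theorem LipschitzWith.abs_sub_fst_sub_le (hφ : LipschitzWith Lφ φ) (x x' : E) (p q : E × F) :
    |φ (x - p.1) - φ (x' - q.1)| ≤ Lφ * (‖x - x'‖ + ‖p - q‖) := by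
  rw [← Real.dist_eq]
  refine (hφ.dist_le_mul _ _).trans ?_
  rw [dist_eq_norm, sub_sub_sub_comm]
  gcongr
  exact (_root_.norm_sub_le _ _).trans (by gcongr; exact norm_fst_le (p - q))

theorem LipschitzWith.norm_smul_sub_smul_le (hφ0 : ∀ z, 0 ≤ φ z) (hφM : ∀ z, φ z ≤ Mφ)
    (hφ : LipschitzWith Lφ φ) (hθM : ∀ w, ‖θ w‖ ≤ Mθ) (hθ : LipschitzWith Lθ θ)
    (x x' : E) (p q : E × F) :
    ‖φ (x - p.1) • θ p.2 - φ (x' - q.1) • θ q.2‖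
      ≤ (Lφ * Mθ + Mφ * Lθ) * (‖x - x'‖ + ‖p - q‖) := by
  have hθpq : ‖θ p.2 - θ q.2‖ ≤ Lθ * (‖x - x'‖ + ‖p - q‖) := by
    rw [← dist_eq_norm]
    refine (hθ.dist_le_mul _ _).trans ?_
    rw [dist_eq_norm]
    gcongr
    exact (norm_snd_le (p - q)).trans (le_add_of_nonneg_left (norm_nonneg _))
  calc ‖φ (x - p.1) • θ p.2 - φ (x' - q.1) • θ q.2‖
      = ‖(φ (x - p.1) - φ (x' - q.1)) • θ p.2 + φ (x' - q.1) • (θ p.2 - θ q.2)‖ := by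
        congr 1; module
    _ ≤ |φ (x - p.1) - φ (x' - q.1)| * ‖θ p.2‖ + φ (x' - q.1) * ‖θ p.2 - θ q.2‖ := by
        refine (norm_add_le _ _).trans_eq ?_
        rw [norm_smul, norm_smul, Real.norm_eq_abs, Real.norm_eq_abs, abs_of_nonneg (hφ0 _)]
    _ ≤ Lφ * (‖x - x'‖ + ‖p - q‖) * Mθ + Mφ * (Lθ * (‖x - x'‖ + ‖p - q‖)) := by
        exact add_le_add
          (mul_le_mul (hφ.abs_sub_fst_sub_le x x' p q) (hθM _) (norm_nonneg _) (by positivity))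
          (mul_le_mul (hφM _) hθpq (norm_nonneg _) ((hφ0 0).trans (hφM 0)))
    _ = (Lφ * Mθ + Mφ * Lθ) * (‖x - x'‖ + ‖p - q‖) := by ring

variable [MeasurableSpace E] [OpensMeasurableSpace E] [MeasurableSpace F]
  {μ ν : Measure (E × F)} {π : Measure ((E × F) × (E × F))}

theorem abs_integral_comp_sub_fst_sub_le [IsProbabilityMeasure π]
    (hπμ : π.map Prod.fst = μ) (hπν : π.map Prod.snd = ν)
    (hI : Integrable (fun p : (E × F) × (E × F) => ‖p.1 - p.2‖) π)
    (hφ0 : ∀ z, 0 ≤ φ z) (hφM : ∀ z, φ z ≤ Mφ) (hφ : LipschitzWith Lφ φ) (x x' : E) :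
    |∫ ζ, φ (x - ζ.1) ∂μ - ∫ ζ, φ (x' - ζ.1) ∂ν|
      ≤ Lφ * (‖x - x'‖ + ∫ p, ‖p.1 - p.2‖ ∂π) := by
  subst hπμ hπν
  exact norm_integral_sub_integral_le_of_coupling rfl rfl
    (integrable_comp_sub_fst hφ0 hφM hφ.continuous x)
    (integrable_comp_sub_fst hφ0 hφM hφ.continuous x') hI
    (hφ.abs_sub_fst_sub_le x x')

variable [OpensMeasurableSpace F] [SecondCountableTopology F]

theorem integrable_comp_sub_fst_smul [IsFiniteMeasure μ] (hφ0 : ∀ z, 0 ≤ φ z)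
    (hφM : ∀ z, φ z ≤ Mφ) (hφ : Continuous φ) (hθM : ∀ w, ‖θ w‖ ≤ Mθ) (hθ : Continuous θ)
    (x : E) :
    Integrable (fun ζ : E × F => φ (x - ζ.1) • θ ζ.2) μ :=
  .of_bound ((integrable_comp_sub_fst hφ0 hφM hφ x).aestronglyMeasurable.smul
      (hθ.stronglyMeasurable.comp_measurable measurable_snd).aestronglyMeasurable)
    (Mφ * Mθ) (ae_of_all _ fun ζ => norm_smul_le_mul (hφ0 _) (hφM _) (hθM ζ.2))

theorem norm_integral_comp_sub_fst_smul_sub_le [IsProbabilityMeasure π]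
    (hπμ : π.map Prod.fst = μ) (hπν : π.map Prod.snd = ν)
    (hI : Integrable (fun p : (E × F) × (E × F) => ‖p.1 - p.2‖) π)
    (hφ0 : ∀ z, 0 ≤ φ z) (hφM : ∀ z, φ z ≤ Mφ) (hφ : LipschitzWith Lφ φ)
    (hθM : ∀ w, ‖θ w‖ ≤ Mθ) (hθ : LipschitzWith Lθ θ) (x x' : E) :
    ‖∫ ζ, φ (x - ζ.1) • θ ζ.2 ∂μ - ∫ ζ, φ (x' - ζ.1) • θ ζ.2 ∂ν‖
      ≤ (Lφ * Mθ + Mφ * Lθ) * (‖x - x'‖ + ∫ p, ‖p.1 - p.2‖ ∂π) := by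
  subst hπμ hπν
  exact norm_integral_sub_integral_le_of_coupling rfl rfl
    (integrable_comp_sub_fst_smul hφ0 hφM hφ.continuous hθM hθ.continuous x)
    (integrable_comp_sub_fst_smul hφ0 hφM hφ.continuous hθM hθ.continuous x') hI
    (hφ.norm_smul_sub_smul_le hφ0 hφM hθM hθ x x')

end LipschitzWeight

theorem norm_uRegMeas_sub_le {d : ℕ} {R Mφ Mθ : ℝ} {Lφ Lθ : ℝ≥0} (hR : 0 < R)
    {φ : Euc d → ℝ} (hφ0 : ∀ z, 0 ≤ φ z) (hφM : ∀ z, φ z ≤ Mφ) (hφ : LipschitzWith Lφ φ)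
    {θR : Euc d → Euc d} (hθM : ∀ w, ‖θR w‖ ≤ Mθ) (hθ : LipschitzWith Lθ θR)
    {μ ν : Measure (Euc d × Euc d)} {π : Measure ((Euc d × Euc d) × (Euc d × Euc d))}
    [IsProbabilityMeasure π] (hπμ : π.map Prod.fst = μ) (hπν : π.map Prod.snd = ν)
    (hI : Integrable (fun p : (Euc d × Euc d) × (Euc d × Euc d) => ‖p.1 - p.2‖) π)
    (x x' : Euc d) :
    ‖uRegMeas d R φ θR μ x - uRegMeas d R φ θR ν x'‖
      ≤ (R * (Lφ * Mθ + Mφ * Lθ) + R ^ 2 * (Mφ * Mθ) * Lφ)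
        * (‖x - x'‖ + ∫ p, ‖p.1 - p.2‖ ∂π) := by
  have : IsProbabilityMeasure ν :=
    hπν ▸ Measure.isProbabilityMeasure_map measurable_snd.aemeasurable
  have hBν : ‖∫ ζ, φ (x' - ζ.1) • θR ζ.2 ∂ν‖ ≤ Mφ * Mθ := by
    simpa using norm_integral_le_of_norm_le_const
      (ae_of_all ν fun ζ => norm_smul_le_mul (hφ0 (x' - ζ.1)) (hφM _) (hθM ζ.2))
  have hMφMθ : 0 ≤ Mφ * Mθ := (norm_nonneg _).trans hBν
  have hA := abs_integral_comp_sub_fst_sub_le hπμ hπν hI hφ0 hφM hφ x x'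
  have hB := norm_integral_comp_sub_fst_smul_sub_le hπμ hπν hI hφ0 hφM hφ hθM hθ x x'
  calc ‖uRegMeas d R φ θR μ x - uRegMeas d R φ θR ν x'‖
      ≤ R⁻¹⁻¹ * ‖∫ ζ, φ (x - ζ.1) • θR ζ.2 ∂μ - ∫ ζ, φ (x' - ζ.1) • θR ζ.2 ∂ν‖
        + R⁻¹⁻¹ ^ 2 * (Mφ * Mθ) * |∫ ζ, φ (x - ζ.1) ∂μ - ∫ ζ, φ (x' - ζ.1) ∂ν| :=
        norm_inv_add_smul_sub_inv_add_smul_le (inv_pos.2 hR)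
          (integral_nonneg fun _ => hφ0 _) (integral_nonneg fun _ => hφ0 _) hBν
    _ ≤ R * ((Lφ * Mθ + Mφ * Lθ) * (‖x - x'‖ + ∫ p, ‖p.1 - p.2‖ ∂π))
        + R ^ 2 * (Mφ * Mθ) * (Lφ * (‖x - x'‖ + ∫ p, ‖p.1 - p.2‖ ∂π)) := by
        rw [inv_inv]
        gcongr
    _ = _ := by ring

theorem stmt5_general (d : ℕ) (R : ℝ) (hR : 0 < R) (Mφ Mθ : ℝ) (Lφ Lθ : ℝ≥0) :
    ∃ C : ℝ, 0 < C ∧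
      ∀ φ : Euc d → ℝ, (∀ x, 0 ≤ φ x) → (∀ x, φ x ≤ Mφ) → LipschitzWith Lφ φ →
      ∀ θR : Euc d → Euc d, (∀ w, ‖θR w‖ ≤ Mθ) → LipschitzWith Lθ θR →
      ∀ x x' : Euc d,
      ∀ μ ν : Measure (Euc d × Euc d), IsProbabilityMeasure μ → IsProbabilityMeasure ν →
      ∀ π : Measure ((Euc d × Euc d) × (Euc d × Euc d)), IsProbabilityMeasure π →
        π.map Prod.fst = μ → π.map Prod.snd = ν →
        ENNReal.ofReal ‖uRegMeas d R φ θR μ x - uRegMeas d R φ θR ν x'‖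
          ≤ ENNReal.ofReal C *
            (ENNReal.ofReal ‖x - x'‖ +
              ∫⁻ ζ : (Euc d × Euc d) × (Euc d × Euc d),
                ENNReal.ofReal ‖ζ.1 - ζ.2‖ ∂π) := by
  refine ⟨R * (Lφ * |Mθ| + |Mφ| * Lθ) + R ^ 2 * (|Mφ| * |Mθ|) * Lφ + 1, by positivity, ?_⟩
  intro φ hφ0 hφM hφ θR hθM hθ x x' μ ν _ _ π _ hπμ hπν
  have hdist_nonneg : 0 ≤ᵐ[π] fun ζ => ‖ζ.1 - ζ.2‖ := ae_of_all _ fun _ => norm_nonneg _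
  by_cases hI : Integrable (fun ζ : (Euc d × Euc d) × (Euc d × Euc d) => ‖ζ.1 - ζ.2‖) π
  · rw [← ofReal_integral_eq_lintegral_ofReal hI hdist_nonneg,
      ← ENNReal.ofReal_add (norm_nonneg _) (integral_nonneg_of_ae hdist_nonneg),
      ← ENNReal.ofReal_mul (by positivity)]
    refine ENNReal.ofReal_le_ofReal
      ((norm_uRegMeas_sub_le hR hφ0 hφM hφ hθM hθ hπμ hπν hI x x').trans ?_)
    rw [abs_of_nonneg ((hφ0 0).trans (hφM 0)), abs_of_nonneg ((norm_nonneg _).trans (hθM 0))]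
    exact mul_le_mul_of_nonneg_right (le_add_of_nonneg_right zero_le_one)
      (add_nonneg (norm_nonneg _) (integral_nonneg_of_ae hdist_nonneg))
  · have hinf : ∫⁻ ζ, ENNReal.ofReal ‖ζ.1 - ζ.2‖ ∂π = ⊤ := by
      by_contra hfin
      exact hI ⟨(continuous_fst.sub continuous_snd).norm.aestronglyMeasurable,
        (hasFiniteIntegral_iff_ofReal hdist_nonneg).2 (lt_top_iff_ne_top.2 hfin)⟩
    rw [hinf, add_top, ENNReal.mul_top (by positivity)]
    exact le_top

/-- global Lipschitz estimate for the regularized Motsch–Tadmor local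
average velocity: there is `C = C(R, M_φ, L_φ, M_θ, L_θ)` such that for all `x, x'`, all
probability measures `μ, ν` and every coupling `π` of `μ` and `ν`,
`|u_R[μ](x) − u_R[ν](x')| ≤ C (|x−x'| + ∫ |ζ₁−ζ₂| dπ)`. -/
theorem stmt5 (d : ℕ) (hd : 1 ≤ d) (R : ℝ) (hR : 0 < R) (Mφ Mθ : ℝ) (Lφ Lθ : ℝ≥0) :
    ∃ C : ℝ, 0 < C ∧
      ∀ φ : Euc d → ℝ, (∀ x, 0 ≤ φ x) → (∀ x, φ x ≤ Mφ) → LipschitzWith Lφ φ →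
      ∀ θR : Euc d → Euc d, (∀ w, ‖θR w‖ ≤ Mθ) → LipschitzWith Lθ θR →
      ∀ x x' : Euc d,
      ∀ μ ν : Measure (Euc d × Euc d), IsProbabilityMeasure μ → IsProbabilityMeasure ν →
      ∀ π : Measure ((Euc d × Euc d) × (Euc d × Euc d)), IsProbabilityMeasure π →
        π.map Prod.fst = μ → π.map Prod.snd = ν →
        ENNReal.ofReal ‖uRegMeas d R φ θR μ x - uRegMeas d R φ θR ν x'‖
          ≤ ENNReal.ofReal C *
            (ENNReal.ofReal ‖x - x'‖ +
              ∫⁻ ζ : (Euc d × Euc d) × (Euc d × Euc d),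
                ENNReal.ofReal ‖ζ.1 - ζ.2‖ ∂π) :=
  stmt5_general d R hR Mφ Mθ Lφ Lθ
end

section
/- Let d ≥ 1 and let φ : ℝ^d → [0,∞) be measurable and bounded with compact support, such that inf_{|x| ≤ r₁} φ(x) > 0 for some r₁ > 0. Let ρ : ℝ^d → [0,∞) be locally integrable. Then ρ(x) = 0 for almost every x in the set { x ∈ ℝ^d : (φ*ρ)(x) = 0 }; equivalently, for every r > 0, ∫_{ { x ∈ B(0,r) : (φ*ρ)(x) = 0 } } ρ(x) dx = 0. -/
open MeasureTheory
open scoped ENNReal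

/-! If `(φ * ρ)(x) = 0`, the nonnegative integrand `φ (x - ·) * ρ` vanishes almost everywhere,
and since `φ > 0` on the ball of radius `r₁`, so does `ρ` on `ball x r₁`. Thus the set of points
of `{φ * ρ = 0}` where `ρ ≠ 0` is locally null, hence null by second countability. -/

open Metric Set

section

variable {E : Type*} [NormedAddCommGroup E] [MeasurableSpace E] {μ : Measure E}

theorem integrable_comp_sub_mul_of_hasCompactSupport [BorelSpace E] {φ ρ : E → ℝ}
    (hφ : Measurable φ) {M : ℝ} (hφM : ∀ y, ‖φ y‖ ≤ M) (hφsupp : HasCompactSupport φ)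
    (hρ : LocallyIntegrable ρ μ) (x : E) :
    Integrable (fun z => φ (x - z) * ρ z) μ := by
  set K := (x - ·) '' tsupport φ
  have hK : IsCompact K := hφsupp.isCompact.image (continuous_sub_left x)
  have hρK : Integrable (K.indicator ρ) μ :=
    (integrable_indicator_iff hK.measurableSet).2 (hρ.integrableOn_isCompact hK)
  have hφ_zero : ∀ z ∉ K, φ (x - z) = 0 := fun z hz =>
    image_eq_zero_of_notMem_tsupport fun h => hz ⟨x - z, h, sub_sub_cancel x z⟩
  refine (hρK.bdd_mul (hφ.comp (measurable_const_sub x)).aestronglyMeasurable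
    (.of_forall fun z => hφM _)).congr (.of_forall fun z => ?_)
  by_cases hz : z ∈ K
  · simp [indicator_of_mem hz]
  · simp [hφ_zero z hz]

theorem measure_ball_inter_ne_zero_eq_zero_of_integral_comp_sub_mul_eq_zero {φ ρ : E → ℝ}
    {x : E} {r : ℝ} (hφ : ∀ y, 0 ≤ φ y) (hφpos : ∀ y, ‖y‖ < r → 0 < φ y) (hρ : ∀ y, 0 ≤ ρ y)
    (hint : Integrable (fun z => φ (x - z) * ρ z) μ) (h0 : ∫ z, φ (x - z) * ρ z ∂μ = 0) :
    μ ({z | ρ z ≠ 0} ∩ ball x r) = 0 := by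
  have hae : (fun z => φ (x - z) * ρ z) =ᵐ[μ] 0 :=
    (integral_eq_zero_iff_of_nonneg (fun z => mul_nonneg (hφ _) (hρ _)) hint).1 h0
  rw [← compl_mem_ae_iff]
  filter_upwards [hae] with z hz ⟨hρz, hzx⟩
  rw [mem_ball, dist_comm, dist_eq_norm] at hzx
  exact hρz ((mul_eq_zero.1 hz).resolve_left (hφpos _ hzx).ne')

end

theorem stmt11_general (d : ℕ) (r₁ : ℝ) (hr₁ : 0 < r₁)
    (φ : Euc d → ℝ) (hφmeas : Measurable φ) (hφnonneg : ∀ x, 0 ≤ φ x)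
    (hφbdd : ∃ M : ℝ, ∀ x, φ x ≤ M) (hφsupp : HasCompactSupport φ)
    (hφinf : ∃ c : ℝ, 0 < c ∧ ∀ x, ‖x‖ ≤ r₁ → c ≤ φ x)
    (ρ : Euc d → ℝ) (hρnonneg : ∀ x, 0 ≤ ρ x)
    (hρloc : LocallyIntegrable ρ volume) :
    ∀ᵐ x : Euc d, (∫ z, φ (x - z) * ρ z) = 0 → ρ x = 0 := by
  obtain ⟨M, hM⟩ := hφbdd
  obtain ⟨c, hc, hcφ⟩ := hφinf
  have hint := integrable_comp_sub_mul_of_hasCompactSupport (μ := volume) hφmeas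
    (fun y => by rw [Real.norm_of_nonneg (hφnonneg y)]; exact hM y) hφsupp hρloc
  have hφpos : ∀ y : Euc d, ‖y‖ < r₁ → 0 < φ y := fun y hy => hc.trans_le (hcφ y hy.le)
  suffices h : volume {x | (∫ z, φ (x - z) * ρ z) = 0 ∧ ρ x ≠ 0} = 0 by
    simpa only [ae_iff, Classical.not_imp] using h
  refine measure_null_of_locally_null _ fun x hx =>
    ⟨_, inter_mem_nhdsWithin _ (ball_mem_nhds x hr₁), ?_⟩
  have hnull := measure_ball_inter_ne_zero_eq_zero_of_integral_comp_sub_mul_eq_zero hφnonneg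
    hφpos hρnonneg (hint x) hx.1
  exact measure_mono_null (inter_subset_inter_left _ fun _ hz => hz.2) hnull

/-- for `φ ≥ 0` bounded, compactly supported and bounded below near the
origin, and `ρ ≥ 0` locally integrable, `ρ` vanishes almost everywhere on the set where the
convolution `φ * ρ` vanishes. -/
theorem stmt11 (d : ℕ) (hd : 1 ≤ d) (r₁ : ℝ) (hr₁ : 0 < r₁)
    (φ : Euc d → ℝ) (hφmeas : Measurable φ) (hφnonneg : ∀ x, 0 ≤ φ x)
    (hφbdd : ∃ M : ℝ, ∀ x, φ x ≤ M) (hφsupp : HasCompactSupport φ)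
    (hφinf : ∃ c : ℝ, 0 < c ∧ ∀ x, ‖x‖ ≤ r₁ → c ≤ φ x)
    (ρ : Euc d → ℝ) (hρmeas : Measurable ρ) (hρnonneg : ∀ x, 0 ≤ ρ x)
    (hρloc : LocallyIntegrable ρ volume) :
    ∀ᵐ x : Euc d, (∫ z, φ (x - z) * ρ z) = 0 → ρ x = 0 :=
  stmt11_general d r₁ hr₁ φ hφmeas hφnonneg hφbdd hφsupp hφinf ρ hρnonneg hρloc
end

section
/- Let d ≥ 1, let 0 < r₁ < r₂, and let φ : ℝ^d → [0,∞) be measurable and bounded with inf_{|x| ≤ r₁} φ(x) > 0 and φ(x) = 0 for |x| > r₂. Let R > 0, let θ_R : ℝ^d → ℝ^d be measurable with |θ_R(w)| ≤ |w|, and let θ ∈ (0,1). Then there exists a constant C, depending only on d, φ and θ, such that for every integrable f : ℝ^d × ℝ^d → [0,∞), ∫_{ℝ^{2d}} |u_R[f](x)|² f(x,v)² dx dv ≤ C ( ∫_{ℝ^{2d}} (1 + |v|^{2/(1−θ)}) f(x,v) dx dv + ∫_{ℝ^{2d}} f(x,v)^{1 + 1/θ} dx dv ). -/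
/-!
With `p = 2 / (1 - θ)`, Young's inequality for the exponents `1 / (1 - θ)` and `1 / θ` gives
`|u|² f² ≤ |u|^p f + f^(1 + 1/θ)`, so it suffices to bound `∫ |u_R[f](x)|^p ρ(x) dx`, where `ρ` is
the spatial density of `f` and `D(x) = R⁻¹ + ∫ φ(x - y) f(y, w)` the denominator of `u_R[f]`.
Jensen's inequality for the weight `φ(x - y) f(y, w)` of total mass at most `D(x)` gives
`|u_R[f](x)|^p ≤ D(x)⁻¹ ∫ |w|^p φ(x - y) f(y, w)`, and after exchanging the order of integration
it remains to bound `∫ φ(x - y) ρ(x) / D(x) dx` uniformly in `y`. Cover the ball of radius `r₂`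
by finitely many balls `B` of radius `r₁ / 2`: on each of them `D ≥ c ∫_B ρ`, hence
`∫_B ρ / D ≤ 1 / c`, and the bound is `(number of balls) · sup φ / c`.
-/

open MeasureTheory
open scoped ENNReal

open Function Metric

theorem sq_mul_sq_le_rpow_mul_add_rpow {u a θ : ℝ} (hu : 0 ≤ u) (ha : 0 ≤ a) (hθ0 : 0 < θ)
    (hθ1 : θ < 1) : u ^ 2 * a ^ 2 ≤ u ^ (2 / (1 - θ)) * a + a ^ (1 + 1 / θ) := by
  have h1θ : 0 < 1 - θ := by linarith
  have hp₁ : 0 ≤ u ^ (2 / (1 - θ)) * a := by positivity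
  have hp₂ : 0 ≤ a ^ (1 + 1 / θ) := by positivity
  have amgm := Real.geom_mean_le_arith_mean2_weighted h1θ.le hθ0.le hp₁ hp₂ (sub_add_cancel 1 θ)
  have hgeom : (u ^ (2 / (1 - θ)) * a) ^ (1 - θ) * (a ^ (1 + 1 / θ)) ^ θ = u ^ 2 * a ^ 2 := by
    rw [Real.mul_rpow (by positivity) ha, ← Real.rpow_mul hu, ← Real.rpow_mul ha,
      div_mul_cancel₀ _ h1θ.ne', mul_assoc, ← Real.rpow_add' ha (by positivity),
      show 1 - θ + (1 + 1 / θ) * θ = 2 by field_simp; ring]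
    norm_cast
  rw [hgeom] at amgm
  nlinarith

theorem ofReal_sq_mul_sq_le_enorm_rpow_mul_add {E : Type*} [SeminormedAddGroup E] (x : E)
    {a θ : ℝ} (ha : 0 ≤ a) (hθ0 : 0 < θ) (hθ1 : θ < 1) :
    ENNReal.ofReal (‖x‖ ^ 2 * a ^ 2) ≤
      ‖x‖ₑ ^ (2 / (1 - θ)) * ENNReal.ofReal a + ENNReal.ofReal (a ^ (1 + 1 / θ)) := by
  have hp : 0 ≤ 2 / (1 - θ) := div_nonneg zero_le_two (by linarith)
  rw [← ofReal_norm, ENNReal.ofReal_rpow_of_nonneg (norm_nonneg _) hp,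
    ← ENNReal.ofReal_mul (by positivity), ← ENNReal.ofReal_add (by positivity) (by positivity)]
  exact ENNReal.ofReal_le_ofReal
    (sq_mul_sq_le_rpow_mul_add_rpow (norm_nonneg x) ha hθ0 hθ1)

theorem enorm_rpow_mul_ofReal_le {E : Type*} [SeminormedAddGroup E] (x : E) {a p : ℝ}
    (ha : 0 ≤ a) (hp : 0 ≤ p) :
    ‖x‖ₑ ^ p * ENNReal.ofReal a ≤ ENNReal.ofReal ((1 + ‖x‖ ^ p) * a) := by
  rw [← ofReal_norm, ENNReal.ofReal_rpow_of_nonneg (norm_nonneg _) hp,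
    ← ENNReal.ofReal_mul (by positivity)]
  gcongr
  linarith

theorem ENNReal.rpow_lintegral_mul_le {α : Type*} [MeasurableSpace α] {μ : Measure α}
    {H G : α → ℝ≥0∞} (hH : AEMeasurable H μ) (hG : AEMeasurable G μ) {p : ℝ} (hp : 1 ≤ p) :
    (∫⁻ a, H a * G a ∂μ) ^ p ≤ (∫⁻ a, H a ^ p * G a ∂μ) * (∫⁻ a, G a ∂μ) ^ (p - 1) := by
  have hp0 : 0 < p := by linarith
  have holder := ENNReal.lintegral_mul_norm_pow_le (f := fun a => H a ^ p * G a)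
    ((hH.pow_const p).mul hG) hG (p := 1 / p) (q := 1 - 1 / p) (by positivity)
    (sub_nonneg.2 ((div_le_one hp0).2 hp)) (add_sub_cancel _ _)
  have split : ∀ a, (H a ^ p * G a) ^ (1 / p) * G a ^ (1 - 1 / p) = H a * G a := fun a => by
    rw [ENNReal.mul_rpow_of_nonneg _ _ (by positivity), ← ENNReal.rpow_mul,
      mul_one_div_cancel hp0.ne', ENNReal.rpow_one, mul_assoc,
      ← ENNReal.rpow_add_of_nonneg _ _ (by positivity) (sub_nonneg.2 ((div_le_one hp0).2 hp)),
      add_sub_cancel, ENNReal.rpow_one]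
  rw [lintegral_congr split] at holder
  calc (∫⁻ a, H a * G a ∂μ) ^ p
      ≤ ((∫⁻ a, H a ^ p * G a ∂μ) ^ (1 / p) * (∫⁻ a, G a ∂μ) ^ (1 - 1 / p)) ^ p :=
        ENNReal.rpow_le_rpow holder hp0.le
    _ = (∫⁻ a, H a ^ p * G a ∂μ) * (∫⁻ a, G a ∂μ) ^ (p - 1) := by
        rw [ENNReal.mul_rpow_of_nonneg _ _ hp0.le, ← ENNReal.rpow_mul, ← ENNReal.rpow_mul,
          one_div_mul_cancel hp0.ne', ENNReal.rpow_one, sub_mul, one_mul,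
          one_div_mul_cancel hp0.ne']

theorem ENNReal.rpow_inv_mul_lintegral_mul_le {α : Type*} [MeasurableSpace α] {μ : Measure α}
    {H G : α → ℝ≥0∞} (hH : AEMeasurable H μ) (hG : AEMeasurable G μ) {p : ℝ} (hp : 1 ≤ p)
    {D : ℝ≥0∞} (hD0 : D ≠ 0) (hDtop : D ≠ ⊤) (hGD : ∫⁻ a, G a ∂μ ≤ D) :
    (D⁻¹ * ∫⁻ a, H a * G a ∂μ) ^ p ≤ (∫⁻ a, H a ^ p * G a ∂μ) * D⁻¹ := by
  have hp0 : 0 < p := by linarith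
  calc (D⁻¹ * ∫⁻ a, H a * G a ∂μ) ^ p
      = D ^ (-p) * (∫⁻ a, H a * G a ∂μ) ^ p := by
        rw [ENNReal.mul_rpow_of_nonneg _ _ hp0.le, ENNReal.inv_rpow, ENNReal.rpow_neg]
    _ ≤ D ^ (-p) * ((∫⁻ a, H a ^ p * G a ∂μ) * D ^ (p - 1)) := by
        gcongr
        exact (ENNReal.rpow_lintegral_mul_le hH hG hp).trans (by gcongr)
    _ = (∫⁻ a, H a ^ p * G a ∂μ) * D⁻¹ := by
        rw [mul_left_comm, ← ENNReal.rpow_add _ _ hD0 hDtop, show -p + (p - 1) = -1 by ring,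
          ENNReal.rpow_neg_one]

theorem setLIntegral_inv_mul_le {α : Type*} [MeasurableSpace α] {μ : Measure α} {s : Set α}
    (hs : MeasurableSet s) {ρ D : α → ℝ≥0∞} (hρ : Measurable ρ) {c : ℝ≥0∞}
    (hD : ∀ x ∈ s, c * ∫⁻ x' in s, ρ x' ∂μ ≤ D x) :
    ∫⁻ x in s, (D x)⁻¹ * ρ x ∂μ ≤ c⁻¹ := by
  set m := ∫⁻ x' in s, ρ x' ∂μ
  calc ∫⁻ x in s, (D x)⁻¹ * ρ x ∂μ
      ≤ ∫⁻ x in s, (c * m)⁻¹ * ρ x ∂μ :=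
        setLIntegral_mono' hs fun x hx => by gcongr; exact hD x hx
    _ = (c * m)⁻¹ * m := lintegral_const_mul _ hρ
    _ ≤ c⁻¹ := by
        rcases eq_or_ne c 0 with hc | hc
        · simp [hc]
        rcases eq_or_ne m 0 with h0 | h0
        · simp [h0]
        rcases eq_or_ne m ⊤ with htop | htop
        · simp [htop, hc]
        rw [ENNReal.mul_inv (Or.inr htop) (Or.inr h0), mul_assoc, ENNReal.inv_mul_cancel h0 htop,
          mul_one]

theorem exists_lintegral_mul_inv_mul_le_of_convolution_le {E : Type*} [NormedAddCommGroup E]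
    [ProperSpace E] [MeasurableSpace E] [OpensMeasurableSpace E] (μ : Measure E)
    {ψ : E → ℝ≥0∞} {M c : ℝ≥0∞} {r₁ r₂ : ℝ} (hM : M ≠ ⊤) (hψM : ∀ x, ψ x ≤ M) (hr₁ : 0 < r₁)
    (hc : c ≠ 0) (hcψ : ∀ x, ‖x‖ ≤ r₁ → c ≤ ψ x) (hψ : ∀ x, r₂ < ‖x‖ → ψ x = 0) :
    ∃ K : ℝ≥0∞, K ≠ ⊤ ∧ ∀ ρ D : E → ℝ≥0∞, Measurable ρ → Measurable D →
      (∀ x, ∫⁻ x', ψ (x - x') * ρ x' ∂μ ≤ D x) →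
      ∀ y, ∫⁻ x, ψ (x - y) * ((D x)⁻¹ * ρ x) ∂μ ≤ K := by
  obtain ⟨T, hT⟩ : ∃ T : Finset E, closedBall (0 : E) r₂ ⊆ ⋃ t ∈ T, ball t (r₁ / 2) :=
    (isCompact_closedBall 0 r₂).elim_finite_subcover _ (fun _ => isOpen_ball)
      fun x _ => Set.mem_iUnion.2 ⟨x, mem_ball_self (by positivity)⟩
  refine ⟨T.card * (M * c⁻¹), by finiteness, fun ρ D hρ hD hconv y => ?_⟩
  set B : E → Set E := fun t => ball (y + t) (r₁ / 2)
  have hball : ∀ t, ∫⁻ x in B t, (D x)⁻¹ * ρ x ∂μ ≤ c⁻¹ := fun t =>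
    setLIntegral_inv_mul_le isOpen_ball.measurableSet hρ fun x hx => calc
      c * ∫⁻ x' in B t, ρ x' ∂μ = ∫⁻ x' in B t, c * ρ x' ∂μ := (lintegral_const_mul _ hρ).symm
      _ ≤ ∫⁻ x' in B t, ψ (x - x') * ρ x' ∂μ :=
        setLIntegral_mono' isOpen_ball.measurableSet fun x' hx' => by
          gcongr
          refine hcψ _ ?_
          rw [← dist_eq_norm]
          linarith [dist_triangle_right x x' (y + t), mem_ball.1 hx, mem_ball.1 hx']
      _ ≤ ∫⁻ x', ψ (x - x') * ρ x' ∂μ := setLIntegral_le_lintegral _ _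
      _ ≤ D x := hconv x
  have hcover : ∀ x, ψ (x - y) * ((D x)⁻¹ * ρ x) ≤
      ∑ t ∈ T, (B t).indicator (fun x => M * ((D x)⁻¹ * ρ x)) x := by
    intro x
    by_cases hxy : ‖x - y‖ ≤ r₂
    · obtain ⟨t, ht, hxt⟩ := Set.mem_iUnion₂.1 (hT (mem_closedBall_zero_iff.2 hxy))
      have hx : x ∈ B t := by
        rwa [mem_ball, dist_eq_norm, sub_add_eq_sub_sub, ← dist_eq_norm]
      refine le_trans ?_ (Finset.single_le_sum (fun _ _ => zero_le) ht)
      rw [Set.indicator_of_mem hx]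
      gcongr
      exact hψM _
    · simp [hψ _ (not_le.1 hxy)]
  calc ∫⁻ x, ψ (x - y) * ((D x)⁻¹ * ρ x) ∂μ
      ≤ ∫⁻ x, ∑ t ∈ T, (B t).indicator (fun x => M * ((D x)⁻¹ * ρ x)) x ∂μ :=
        lintegral_mono hcover
    _ = ∑ t ∈ T, M * ∫⁻ x in B t, (D x)⁻¹ * ρ x ∂μ := by
        have hmeas : ∀ t, Measurable ((B t).indicator fun x => M * ((D x)⁻¹ * ρ x)) := fun t =>
          (measurable_const.mul (hD.inv.mul hρ)).indicator isOpen_ball.measurableSet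
        rw [lintegral_finsetSum T fun t _ => hmeas t]
        refine Finset.sum_congr rfl fun t _ => ?_
        rw [lintegral_indicator isOpen_ball.measurableSet, lintegral_const_mul' M _ hM]
    _ ≤ ∑ t ∈ T, M * c⁻¹ := Finset.sum_le_sum fun t _ => by gcongr; exact hball t
    _ = T.card * (M * c⁻¹) := by rw [Finset.sum_const, nsmul_eq_mul]

theorem lintegral_lintegral_kernel_mul_inv_mul_le {E V : Type*} [MeasurableSpace E]
    [MeasurableSpace V] {μ : Measure E} {ν : Measure V} [SFinite μ] [SFinite ν]
    {k : E → E → ℝ≥0∞} (hk : Measurable (uncurry k)) {F : E × V → ℝ≥0∞} (hF : Measurable F)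
    {W : V → ℝ≥0∞} (hW : Measurable W) {D : E → ℝ≥0∞} (hD : Measurable D) {K : ℝ≥0∞}
    (hK : ∀ y, ∫⁻ x, k x y * ((D x)⁻¹ * ∫⁻ v, F (x, v) ∂ν) ∂μ ≤ K) :
    ∫⁻ z, (∫⁻ ζ, W ζ.2 * (k z.1 ζ.1 * F ζ) ∂μ.prod ν) * (D z.1)⁻¹ * F z ∂μ.prod ν ≤
      K * ∫⁻ ζ, W ζ.2 * F ζ ∂μ.prod ν := by
  set ρ : E → ℝ≥0∞ := fun x => ∫⁻ v, F (x, v) ∂ν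
  have hρ : Measurable ρ := hF.lintegral_prod_right'
  have hk' : Measurable fun q : E × (E × V) => k q.1 q.2.1 :=
    hk.comp (f := fun q : E × (E × V) => (q.1, q.2.1)) (by fun_prop)
  have hN : Measurable fun x => ∫⁻ ζ, W ζ.2 * (k x ζ.1 * F ζ) ∂μ.prod ν :=
    Measurable.lintegral_prod_right' (f := fun q : E × (E × V) => W q.2.2 * (k q.1 q.2.1 * F q.2))
      (by fun_prop)
  calc ∫⁻ z, (∫⁻ ζ, W ζ.2 * (k z.1 ζ.1 * F ζ) ∂μ.prod ν) * (D z.1)⁻¹ * F z ∂μ.prod ν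
      = ∫⁻ x, (∫⁻ ζ, W ζ.2 * (k x ζ.1 * F ζ) ∂μ.prod ν) * ((D x)⁻¹ * ρ x) ∂μ := by
        rw [lintegral_prod _ (by fun_prop)]
        refine lintegral_congr fun x => ?_
        rw [← mul_assoc, ← lintegral_const_mul _ (by fun_prop)]
    _ = ∫⁻ x, ∫⁻ ζ, W ζ.2 * F ζ * (k x ζ.1 * ((D x)⁻¹ * ρ x)) ∂μ.prod ν ∂μ := by
        refine lintegral_congr fun x => ?_
        rw [← lintegral_mul_const _ (by fun_prop)]
        exact lintegral_congr fun ζ => by ring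
    _ = ∫⁻ ζ, ∫⁻ x, W ζ.2 * F ζ * (k x ζ.1 * ((D x)⁻¹ * ρ x)) ∂μ ∂μ.prod ν :=
        lintegral_lintegral_swap (by fun_prop)
    _ = ∫⁻ ζ, W ζ.2 * F ζ * ∫⁻ x, k x ζ.1 * ((D x)⁻¹ * ρ x) ∂μ ∂μ.prod ν :=
        lintegral_congr fun ζ => lintegral_const_mul _ (by fun_prop)
    _ ≤ ∫⁻ ζ, W ζ.2 * F ζ * K ∂μ.prod ν := lintegral_mono fun ζ => by gcongr; exact hK ζ.1
    _ = K * ∫⁻ ζ, W ζ.2 * F ζ ∂μ.prod ν := by rw [lintegral_mul_const _ (by fun_prop), mul_comm]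

section LocalAverage

variable {d : ℕ} {R : ℝ} {φ : Euc d → ℝ} {θR : Euc d → Euc d} {f : Euc d × Euc d → ℝ}

theorem ofReal_uReg_denominator (hφ : Measurable φ) (hφ0 : ∀ x, 0 ≤ φ x) {M : ℝ}
    (hφM : ∀ x, φ x ≤ M) (hR : 0 ≤ R) (hf0 : ∀ z, 0 ≤ f z) (hf : Integrable f) (x : Euc d) :
    ENNReal.ofReal (R⁻¹ + ∫ ζ, φ (x - ζ.1) * f ζ) =
      ENNReal.ofReal R⁻¹ + ∫⁻ ζ, ENNReal.ofReal (φ (x - ζ.1)) * ENNReal.ofReal (f ζ) := by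
  have hint : Integrable fun ζ : Euc d × Euc d => φ (x - ζ.1) * f ζ :=
    hf.bdd_mul (hφ.comp (measurable_const.sub measurable_fst)).aestronglyMeasurable
      (.of_forall fun ζ => by rw [Real.norm_of_nonneg (hφ0 _)]; exact hφM _)
  rw [ENNReal.ofReal_add (inv_nonneg.2 hR) (integral_nonneg fun ζ => mul_nonneg (hφ0 _) (hf0 _)),
    ofReal_integral_eq_lintegral_ofReal hint (.of_forall fun ζ => mul_nonneg (hφ0 _) (hf0 _))]
  simp_rw [ENNReal.ofReal_mul (hφ0 _)]

theorem enorm_uReg_le (hφ : Measurable φ) (hφ0 : ∀ x, 0 ≤ φ x) {M : ℝ} (hφM : ∀ x, φ x ≤ M)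
    (hR : 0 < R) (hθR : ∀ w, ‖θR w‖ ≤ ‖w‖) (hf0 : ∀ z, 0 ≤ f z) (hf : Integrable f)
    (x : Euc d) :
    ‖uReg d R φ θR f x‖ₑ ≤
      (ENNReal.ofReal R⁻¹ + ∫⁻ ζ, ENNReal.ofReal (φ (x - ζ.1)) * ENNReal.ofReal (f ζ))⁻¹ *
        ∫⁻ ζ, ‖ζ.2‖ₑ * (ENNReal.ofReal (φ (x - ζ.1)) * ENNReal.ofReal (f ζ)) := by
  have hden : 0 < R⁻¹ + ∫ ζ, φ (x - ζ.1) * f ζ :=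
    add_pos_of_pos_of_nonneg (inv_pos.2 hR)
      (integral_nonneg fun ζ => mul_nonneg (hφ0 _) (hf0 _))
  rw [uReg, enorm_smul, ← ofReal_norm, Real.norm_of_nonneg (inv_nonneg.2 hden.le),
    ENNReal.ofReal_inv_of_pos hden, ofReal_uReg_denominator hφ hφ0 hφM hR.le hf0 hf]
  gcongr
  calc ‖∫ ζ, (φ (x - ζ.1) * f ζ) • θR ζ.2‖ₑ
      ≤ ∫⁻ ζ, ‖(φ (x - ζ.1) * f ζ) • θR ζ.2‖ₑ := enorm_integral_le_lintegral_enorm _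
    _ ≤ ∫⁻ ζ, ‖ζ.2‖ₑ * (ENNReal.ofReal (φ (x - ζ.1)) * ENNReal.ofReal (f ζ)) :=
        lintegral_mono fun ζ => by
          rw [enorm_smul, Real.enorm_of_nonneg (mul_nonneg (hφ0 _) (hf0 _)),
            ENNReal.ofReal_mul (hφ0 _), mul_comm]
          gcongr
          exact enorm_le_iff_norm_le.2 (hθR _)

theorem lintegral_enorm_uReg_rpow_mul_le (hφ : Measurable φ) (hφ0 : ∀ x, 0 ≤ φ x) {M : ℝ}
    (hφM : ∀ x, φ x ≤ M) (hR : 0 < R) (hθR : ∀ w, ‖θR w‖ ≤ ‖w‖) (hfm : Measurable f)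
    (hf0 : ∀ z, 0 ≤ f z) (hf : Integrable f) {p : ℝ} (hp : 1 ≤ p) {K : ℝ≥0∞}
    (hK : ∀ ρ D : Euc d → ℝ≥0∞, Measurable ρ → Measurable D →
      (∀ x, ∫⁻ x', ENNReal.ofReal (φ (x - x')) * ρ x' ≤ D x) →
      ∀ y, ∫⁻ x, ENNReal.ofReal (φ (x - y)) * ((D x)⁻¹ * ρ x) ≤ K) :
    ∫⁻ z, ‖uReg d R φ θR f z.1‖ₑ ^ p * ENNReal.ofReal (f z) ≤
      K * ∫⁻ z, ‖z.2‖ₑ ^ p * ENNReal.ofReal (f z) := by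
  set F : Euc d × Euc d → ℝ≥0∞ := fun z => ENNReal.ofReal (f z)
  set k : Euc d → Euc d → ℝ≥0∞ := fun x y => ENNReal.ofReal (φ (x - y))
  set D : Euc d → ℝ≥0∞ := fun x => ENNReal.ofReal R⁻¹ + ∫⁻ ζ, k x ζ.1 * F ζ
  have hF : Measurable F := hfm.ennreal_ofReal
  have hk : Measurable (uncurry k) := (hφ.comp measurable_sub).ennreal_ofReal
  have hD : Measurable D := measurable_const.add
    (Measurable.lintegral_prod_right' (f := fun q : Euc d × (Euc d × Euc d) => k q.1 q.2.1 * F q.2)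
      (by fun_prop))
  have hkF : ∀ x, Measurable fun ζ : Euc d × Euc d => k x ζ.1 * F ζ := fun x =>
    (hk.comp (measurable_const.prodMk measurable_fst)).mul hF
  have hconv : ∀ x, ∫⁻ x', k x x' * ∫⁻ v, F (x', v) ≤ D x := fun x => calc
    ∫⁻ x', k x x' * ∫⁻ v, F (x', v) = ∫⁻ ζ, k x ζ.1 * F ζ := by
      rw [Measure.volume_eq_prod, lintegral_prod _ (hkF x).aemeasurable]
      exact lintegral_congr fun x' => (lintegral_const_mul _ (hF.comp measurable_prodMk_left)).symm
    _ ≤ D x := le_add_self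
  have hpointwise : ∀ x, ‖uReg d R φ θR f x‖ₑ ^ p ≤
      (∫⁻ ζ, ‖ζ.2‖ₑ ^ p * (k x ζ.1 * F ζ)) * (D x)⁻¹ := fun x => by
    have hD0 : D x ≠ 0 := (lt_of_lt_of_le (ENNReal.ofReal_pos.2 (inv_pos.2 hR)) le_self_add).ne'
    have hDtop : D x ≠ ⊤ := by
      rw [show D x = _ from (ofReal_uReg_denominator hφ hφ0 hφM hR.le hf0 hf x).symm]
      exact ENNReal.ofReal_ne_top
    exact (ENNReal.rpow_le_rpow (enorm_uReg_le hφ hφ0 hφM hR hθR hf0 hf x) (by linarith)).trans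
      (ENNReal.rpow_inv_mul_lintegral_mul_le (by fun_prop) (hkF x).aemeasurable hp hD0 hDtop
        le_add_self)
  calc ∫⁻ z, ‖uReg d R φ θR f z.1‖ₑ ^ p * F z
      ≤ ∫⁻ z, (∫⁻ ζ, ‖ζ.2‖ₑ ^ p * (k z.1 ζ.1 * F ζ)) * (D z.1)⁻¹ * F z :=
        lintegral_mono fun z => by gcongr; exact hpointwise z.1
    _ ≤ K * ∫⁻ z, ‖z.2‖ₑ ^ p * F z := by
        rw [Measure.volume_eq_prod]
        exact lintegral_lintegral_kernel_mul_inv_mul_le hk hF (measurable_enorm.pow_const p) hD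
          (hK _ D hF.lintegral_prod_right' hD hconv)

end LocalAverage

theorem stmt13_general (d : ℕ) (r₁ r₂ : ℝ) (hr₁ : 0 < r₁)
    (φ : Euc d → ℝ) (hφmeas : Measurable φ) (hφnonneg : ∀ x, 0 ≤ φ x)
    (hφbdd : ∃ M : ℝ, ∀ x, φ x ≤ M)
    (hφinf : ∃ c : ℝ, 0 < c ∧ ∀ x, ‖x‖ ≤ r₁ → c ≤ φ x)
    (hφsupp : ∀ x, r₂ < ‖x‖ → φ x = 0)
    (θ : ℝ) (hθ : θ ∈ Set.Ioo (0 : ℝ) 1) :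
    ∃ C : ℝ, 0 < C ∧ ∀ R : ℝ, 0 < R → ∀ θR : Euc d → Euc d, Measurable θR →
      (∀ w, ‖θR w‖ ≤ ‖w‖) →
      ∀ f : Euc d × Euc d → ℝ, Measurable f → (∀ z, 0 ≤ f z) → Integrable f →
      (∫⁻ z : Euc d × Euc d,
          ENNReal.ofReal (‖uReg d R φ θR f z.1‖ ^ (2 : ℕ) * f z ^ (2 : ℕ)))
        ≤ ENNReal.ofReal C *
          ((∫⁻ z : Euc d × Euc d,
              ENNReal.ofReal ((1 + ‖z.2‖ ^ (2 / (1 - θ))) * f z))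
            + ∫⁻ z : Euc d × Euc d, ENNReal.ofReal (f z ^ (1 + 1 / θ))) := by
  obtain ⟨M, hM⟩ := hφbdd
  obtain ⟨c, hc, hcφ⟩ := hφinf
  obtain ⟨hθ0, hθ1⟩ := hθ
  obtain ⟨K, hKtop, hK⟩ := exists_lintegral_mul_inv_mul_le_of_convolution_le volume
    (ψ := fun x => ENNReal.ofReal (φ x)) (r₂ := r₂) ENNReal.ofReal_ne_top
    (fun x => ENNReal.ofReal_le_ofReal (hM x)) hr₁ (ENNReal.ofReal_pos.2 hc).ne'
    (fun x hx => ENNReal.ofReal_le_ofReal (hcφ x hx)) (fun x hx => by simp [hφsupp x hx])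
  refine ⟨K.toReal + 1, by positivity, fun R hR θR _ hθR f hfm hf0 hf => ?_⟩
  have hp : 1 ≤ 2 / (1 - θ) := by rw [le_div_iff₀ (by linarith)]; linarith
  have hKC : K ≤ ENNReal.ofReal (K.toReal + 1) := by
    rw [ENNReal.ofReal_add ENNReal.toReal_nonneg zero_le_one, ENNReal.ofReal_toReal hKtop]
    exact le_self_add
  have hC1 : 1 ≤ ENNReal.ofReal (K.toReal + 1) := by
    rw [← ENNReal.ofReal_one]; gcongr; linarith [ENNReal.toReal_nonneg (a := K)]
  calc ∫⁻ z, ENNReal.ofReal (‖uReg d R φ θR f z.1‖ ^ 2 * f z ^ 2)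
      ≤ ∫⁻ z, (‖uReg d R φ θR f z.1‖ₑ ^ (2 / (1 - θ)) * ENNReal.ofReal (f z) +
          ENNReal.ofReal (f z ^ (1 + 1 / θ))) :=
        lintegral_mono fun z => ofReal_sq_mul_sq_le_enorm_rpow_mul_add _ (hf0 z) hθ0 hθ1
    _ = (∫⁻ z, ‖uReg d R φ θR f z.1‖ₑ ^ (2 / (1 - θ)) * ENNReal.ofReal (f z)) +
          ∫⁻ z, ENNReal.ofReal (f z ^ (1 + 1 / θ)) :=
        lintegral_add_right _ (hfm.pow_const _).ennreal_ofReal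
    _ ≤ K * (∫⁻ z, ENNReal.ofReal ((1 + ‖z.2‖ ^ (2 / (1 - θ))) * f z)) +
          ∫⁻ z, ENNReal.ofReal (f z ^ (1 + 1 / θ)) := by
        gcongr
        refine (lintegral_enorm_uReg_rpow_mul_le hφmeas hφnonneg hM hR hθR hfm hf0 hf hp
          hK).trans ?_
        gcongr with z
        exact enorm_rpow_mul_ofReal_le _ (hf0 z) (by linarith)
    _ ≤ ENNReal.ofReal (K.toReal + 1) *
          ((∫⁻ z, ENNReal.ofReal ((1 + ‖z.2‖ ^ (2 / (1 - θ))) * f z)) +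
          ∫⁻ z, ENNReal.ofReal (f z ^ (1 + 1 / θ))) := by
        rw [mul_add]
        gcongr
        exact le_mul_of_one_le_left' hC1

/-- the weighted `L²` bound on the local alignment drift:
`∫ |u_R[f](x)|² f² dz ≤ C ( ∫ (1+|v|^{2/(1−θ)}) f dz + ∫ f^{1+1/θ} dz )`, with a constant
depending only on `d`, `φ` and `θ` (not on `R`, `θ_R` or `f`). -/
theorem stmt13 (d : ℕ) (hd : 1 ≤ d) (r₁ r₂ : ℝ) (hr₁ : 0 < r₁) (hr₁₂ : r₁ < r₂)
    (φ : Euc d → ℝ) (hφmeas : Measurable φ) (hφnonneg : ∀ x, 0 ≤ φ x)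
    (hφbdd : ∃ M : ℝ, ∀ x, φ x ≤ M)
    (hφinf : ∃ c : ℝ, 0 < c ∧ ∀ x, ‖x‖ ≤ r₁ → c ≤ φ x)
    (hφsupp : ∀ x, r₂ < ‖x‖ → φ x = 0)
    (θ : ℝ) (hθ : θ ∈ Set.Ioo (0 : ℝ) 1) :
    ∃ C : ℝ, 0 < C ∧ ∀ R : ℝ, 0 < R → ∀ θR : Euc d → Euc d, Measurable θR →
      (∀ w, ‖θR w‖ ≤ ‖w‖) →
      ∀ f : Euc d × Euc d → ℝ, Measurable f → (∀ z, 0 ≤ f z) → Integrable f →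
      (∫⁻ z : Euc d × Euc d,
          ENNReal.ofReal (‖uReg d R φ θR f z.1‖ ^ (2 : ℕ) * f z ^ (2 : ℕ)))
        ≤ ENNReal.ofReal C *
          ((∫⁻ z : Euc d × Euc d,
              ENNReal.ofReal ((1 + ‖z.2‖ ^ (2 / (1 - θ))) * f z))
            + ∫⁻ z : Euc d × Euc d, ENNReal.ofReal (f z ^ (1 + 1 / θ))) :=
  stmt13_general d r₁ r₂ hr₁ φ hφmeas hφnonneg hφbdd hφinf hφsupp θ hθ
end

section
/- Let d ≥ 1, let φ : ℝ^d → ℝ be continuous with compact support, let θ ∈ (0,1), set p = 1 + 1/θ, let δ > 0 and γ = δ(1−θ). Then there exists a constant C, depending only on d, φ, θ and δ, such that for every measurable f : ℝ^d × ℝ^d → [0,∞) and every r ≥ 1, ∫_{|x| ≥ r} | ∫_{ℝ^d} φ(v) f(x,v) dv |² dx ≤ C r^{−γ} ( ∫_{ℝ^{2d}} (1 + |x|^δ) f(x,v) dx dv + ∫_{ℝ^{2d}} f(x,v)^p dx dv ). -/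
/-! With `h x = ∫_K f(x,v) dv`, `K` the support of `φ`, one has `|ρ_φ(x)| ≤ ‖φ‖_∞ h x`.
Since `pθ = 1 + θ`, `h² = h^{1-θ} (h^p)^θ`, and Hölder in `x` bounds `∫_{|x|≥r} h²` by
`(∫_{|x|≥r} h)^{1-θ} (∫ h^p)^θ`. On `|x| ≥ r` the first integral is at most `r^{-δ}` times the
`δ`-moment of `f`, and Jensen in `v` gives `h^p ≤ |K|^{p-1} ∫_K f^p dv`. As `(p-1)θ = 1`, the
estimate follows from `a^{1-θ} b^θ ≤ a + b`. -/

open MeasureTheory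
open scoped ENNReal

section Lebesgue

variable {α : Type*} [MeasurableSpace α] {μ : Measure α}

theorem lintegral_sq_le_lintegral_rpow_mul_lintegral_rpow {h : α → ℝ≥0∞} (hh : AEMeasurable h μ)
    {θ : ℝ} (hθ : θ ∈ Set.Ioo 0 1) :
    ∫⁻ x, h x ^ 2 ∂μ ≤ (∫⁻ x, h x ∂μ) ^ (1 - θ) * (∫⁻ x, h x ^ (1 + 1 / θ) ∂μ) ^ θ := by
  obtain ⟨hθ0, hθ1⟩ := hθ
  have hsplit : ∀ x, h x ^ 2 = h x ^ (1 - θ) * (h x ^ (1 + 1 / θ)) ^ θ := fun x => by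
    rw [← ENNReal.rpow_mul, ← ENNReal.rpow_add_of_nonneg _ _ (by linarith) (by positivity),
      ← ENNReal.rpow_natCast]
    congr 1
    field_simp
    ring
  simp_rw [hsplit]
  exact ENNReal.lintegral_mul_norm_pow_le hh (hh.pow_const _) (by linarith) hθ0.le (by ring)

theorem rpow_lintegral_le_measure_univ_rpow_mul {g : α → ℝ≥0∞} (hg : AEMeasurable g μ) {p : ℝ}
    (hp : 1 < p) : (∫⁻ x, g x ∂μ) ^ p ≤ μ Set.univ ^ (p - 1) * ∫⁻ x, g x ^ p ∂μ := by
  have hp0 : 0 < p := by linarith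
  have holder : ∫⁻ x, g x ∂μ ≤ μ Set.univ ^ (1 - 1 / p) * (∫⁻ x, g x ^ p ∂μ) ^ (1 / p) := by
    have key := ENNReal.lintegral_mul_norm_pow_le (f := fun _ => 1) (g := fun x => g x ^ p)
      aemeasurable_const (hg.pow_const p) (p := 1 - 1 / p) (q := 1 / p)
      (by rw [sub_nonneg, div_le_one hp0]; exact hp.le) (by positivity) (by ring)
    simpa only [ENNReal.one_rpow, one_mul, ← ENNReal.rpow_mul, mul_one_div_cancel hp0.ne',
      ENNReal.rpow_one, lintegral_const] using key
  calc (∫⁻ x, g x ∂μ) ^ p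
      ≤ (μ Set.univ ^ (1 - 1 / p) * (∫⁻ x, g x ^ p ∂μ) ^ (1 / p)) ^ p := by gcongr
    _ = μ Set.univ ^ (p - 1) * ∫⁻ x, g x ^ p ∂μ := by
      rw [ENNReal.mul_rpow_of_nonneg _ _ hp0.le, ← ENNReal.rpow_mul, ← ENNReal.rpow_mul,
        one_div_mul_cancel hp0.ne', ENNReal.rpow_one]
      congr 2
      field_simp

end Lebesgue

theorem ENNReal.rpow_mul_rpow_le_add (a b : ℝ≥0∞) {θ : ℝ} (hθ : θ ∈ Set.Icc 0 1) :
    a ^ (1 - θ) * b ^ θ ≤ a + b :=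
  calc a ^ (1 - θ) * b ^ θ ≤ (a + b) ^ (1 - θ) * (a + b) ^ θ := by
        gcongr
        · linarith [hθ.2]
        · exact le_self_add
        · exact hθ.1
        · exact le_add_self
    _ = a + b := by
      rw [← ENNReal.rpow_add_of_nonneg _ _ (by linarith [hθ.2]) hθ.1, sub_add_cancel,
        ENNReal.rpow_one]

theorem enorm_integral_mul_le_ofReal_mul_setLIntegral {V : Type*} [MeasurableSpace V]
    {ν : Measure V} {φ g : V → ℝ} {A : ℝ} {K : Set V} (hK : MeasurableSet K)
    (hφA : ∀ v, ‖φ v‖ ≤ A) (hφK : ∀ v ∉ K, φ v = 0) (hg : ∀ v, 0 ≤ g v) :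
    ‖∫ v, φ v * g v ∂ν‖ₑ ≤ ENNReal.ofReal A * ∫⁻ v in K, ENNReal.ofReal (g v) ∂ν := by
  have hpt (v : V) :
      ‖φ v * g v‖ₑ ≤ ENNReal.ofReal A * K.indicator (fun v => ENNReal.ofReal (g v)) v := by
    by_cases hv : v ∈ K
    · rw [Set.indicator_of_mem hv, enorm_mul, Real.enorm_of_nonneg (hg v), ← ofReal_norm]
      gcongr
      exact hφA v
    · simp [hφK v hv]
  calc ‖∫ v, φ v * g v ∂ν‖ₑ ≤ ∫⁻ v, ‖φ v * g v‖ₑ ∂ν := enorm_integral_le_lintegral_enorm _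
    _ ≤ ∫⁻ v, ENNReal.ofReal A * K.indicator (fun v => ENNReal.ofReal (g v)) v ∂ν :=
      lintegral_mono hpt
    _ = ENNReal.ofReal A * ∫⁻ v in K, ENNReal.ofReal (g v) ∂ν := by
      rw [lintegral_const_mul' _ _ ENNReal.ofReal_ne_top, lintegral_indicator hK]

theorem setLIntegral_le_rpow_neg_mul_lintegral_norm_rpow {E : Type*} [NormedAddCommGroup E]
    [MeasurableSpace E] [OpensMeasurableSpace E] (μ : Measure E) (h : E → ℝ≥0∞) {r δ : ℝ}
    (hr : 0 < r) (hδ : 0 ≤ δ) :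
    ∫⁻ x in {x | r ≤ ‖x‖}, h x ∂μ
      ≤ ENNReal.ofReal (r ^ (-δ)) * ∫⁻ x, ENNReal.ofReal (‖x‖ ^ δ) * h x ∂μ := by
  have hpt (x : E) (hx : r ≤ ‖x‖) :
      h x ≤ ENNReal.ofReal (r ^ (-δ)) * (ENNReal.ofReal (‖x‖ ^ δ) * h x) := by
    have hweight : 1 ≤ r ^ (-δ) * ‖x‖ ^ δ := by
      rw [Real.rpow_neg hr.le, ← div_eq_inv_mul, one_le_div (by positivity)]
      exact Real.rpow_le_rpow hr.le hx hδ
    calc h x = 1 * h x := (one_mul _).symm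
      _ ≤ ENNReal.ofReal (r ^ (-δ) * ‖x‖ ^ δ) * h x := by
        gcongr
        rwa [← ENNReal.ofReal_one, ENNReal.ofReal_le_ofReal_iff (by positivity)]
      _ = _ := by rw [ENNReal.ofReal_mul (by positivity), mul_assoc]
  calc ∫⁻ x in {x | r ≤ ‖x‖}, h x ∂μ
      ≤ ∫⁻ x in {x | r ≤ ‖x‖}, ENNReal.ofReal (r ^ (-δ)) * (ENNReal.ofReal (‖x‖ ^ δ) * h x) ∂μ :=
        setLIntegral_mono' (measurableSet_le measurable_const measurable_norm) hpt
    _ ≤ ∫⁻ x, ENNReal.ofReal (r ^ (-δ)) * (ENNReal.ofReal (‖x‖ ^ δ) * h x) ∂μ :=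
        setLIntegral_le_lintegral _ _
    _ = _ := lintegral_const_mul' _ _ ENNReal.ofReal_ne_top

section Prod

variable {E V : Type*} [MeasurableSpace E] [MeasurableSpace V] {μ : Measure E} {ν : Measure V}
  [SFinite ν]

theorem lintegral_setLIntegral_le_lintegral_prod {F : E × V → ℝ≥0∞}
    (hF : AEMeasurable F (μ.prod ν)) (K : Set V) :
    ∫⁻ x, ∫⁻ v in K, F (x, v) ∂ν ∂μ ≤ ∫⁻ z, F z ∂μ.prod ν := by
  rw [lintegral_prod _ hF]
  exact lintegral_mono fun x => setLIntegral_le_lintegral _ _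

theorem lintegral_rpow_setLIntegral_le {F : E × V → ℝ≥0∞} (hF : Measurable F) (K : Set V)
    {p : ℝ} (hp : 1 < p) :
    ∫⁻ x, (∫⁻ v in K, F (x, v) ∂ν) ^ p ∂μ ≤ ν K ^ (p - 1) * ∫⁻ z, F z ^ p ∂μ.prod ν := by
  calc ∫⁻ x, (∫⁻ v in K, F (x, v) ∂ν) ^ p ∂μ
      ≤ ∫⁻ x, ν K ^ (p - 1) * ∫⁻ v in K, F (x, v) ^ p ∂ν ∂μ := by
        refine lintegral_mono fun x => ?_
        simpa only [Measure.restrict_apply_univ] using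
          rpow_lintegral_le_measure_univ_rpow_mul (μ := ν.restrict K) (g := fun v => F (x, v))
            (hF.comp measurable_prodMk_left).aemeasurable hp
    _ = ν K ^ (p - 1) * ∫⁻ x, ∫⁻ v in K, F (x, v) ^ p ∂ν ∂μ :=
      lintegral_const_mul _ (hF.pow_const p).lintegral_prod_right'
    _ ≤ ν K ^ (p - 1) * ∫⁻ z, F z ^ p ∂μ.prod ν := by
      gcongr
      exact lintegral_setLIntegral_le_lintegral_prod (hF.pow_const p).aemeasurable K

end Prod

section Moment

variable {E V : Type*} [NormedAddCommGroup E] [MeasurableSpace E] [OpensMeasurableSpace E]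
  [MeasurableSpace V] (μ : Measure E) (ν : Measure V) [SFinite ν]

theorem setLIntegral_norm_ge_setLIntegral_le {F : E × V → ℝ≥0∞} (hF : Measurable F) (K : Set V)
    {r δ : ℝ} (hr : 0 < r) (hδ : 0 ≤ δ) :
    ∫⁻ x in {x | r ≤ ‖x‖}, ∫⁻ v in K, F (x, v) ∂ν ∂μ
      ≤ ENNReal.ofReal (r ^ (-δ)) * ∫⁻ z, ENNReal.ofReal (1 + ‖z.1‖ ^ δ) * F z ∂μ.prod ν := by
  refine (setLIntegral_le_rpow_neg_mul_lintegral_norm_rpow μ _ hr hδ).trans ?_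
  gcongr
  calc ∫⁻ x, ENNReal.ofReal (‖x‖ ^ δ) * ∫⁻ v in K, F (x, v) ∂ν ∂μ
      = ∫⁻ x, ∫⁻ v in K, ENNReal.ofReal (‖x‖ ^ δ) * F (x, v) ∂ν ∂μ :=
        lintegral_congr fun x => (lintegral_const_mul' _ _ ENNReal.ofReal_ne_top).symm
    _ ≤ ∫⁻ x, ∫⁻ v in K, ENNReal.ofReal (1 + ‖(x, v).1‖ ^ δ) * F (x, v) ∂ν ∂μ := by
        gcongr
        linarith
    _ ≤ ∫⁻ z, ENNReal.ofReal (1 + ‖z.1‖ ^ δ) * F z ∂μ.prod ν :=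
        lintegral_setLIntegral_le_lintegral_prod (by fun_prop) K

theorem setLIntegral_norm_ge_sq_integral_mul_le {φ : V → ℝ} {A : ℝ} {K : Set V}
    (hK : MeasurableSet K) (hφA : ∀ v, ‖φ v‖ ≤ A) (hφK : ∀ v ∉ K, φ v = 0) {f : E × V → ℝ}
    (hf : Measurable f) (hf0 : ∀ z, 0 ≤ f z) {θ δ r : ℝ} (hθ : θ ∈ Set.Ioo 0 1) (hδ : 0 ≤ δ)
    (hr : 0 < r) :
    ∫⁻ x in {x | r ≤ ‖x‖}, ENNReal.ofReal ((∫ v, φ v * f (x, v) ∂ν) ^ 2) ∂μ ≤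
      ENNReal.ofReal A ^ 2 * ν K * ENNReal.ofReal (r ^ (-(δ * (1 - θ)))) *
        ((∫⁻ z, ENNReal.ofReal ((1 + ‖z.1‖ ^ δ) * f z) ∂μ.prod ν)
          + ∫⁻ z, ENNReal.ofReal (f z ^ (1 + 1 / θ)) ∂μ.prod ν) := by
  obtain ⟨hθ0, hθ1⟩ := hθ
  set p := 1 + 1 / θ
  have hp : 1 < p := by simp only [p]; linarith [one_div_pos.mpr hθ0]
  set S := {x : E | r ≤ ‖x‖}
  set F : E × V → ℝ≥0∞ := fun z => ENNReal.ofReal (f z)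
  have hF : Measurable F := hf.ennreal_ofReal
  set h : E → ℝ≥0∞ := fun x => ∫⁻ v in K, F (x, v) ∂ν
  set M := ∫⁻ z, ENNReal.ofReal ((1 + ‖z.1‖ ^ δ) * f z) ∂μ.prod ν
  set N := ∫⁻ z, ENNReal.ofReal (f z ^ p) ∂μ.prod ν
  have hρ (x : E) :
      ENNReal.ofReal ((∫ v, φ v * f (x, v) ∂ν) ^ 2) ≤ ENNReal.ofReal A ^ 2 * h x ^ 2 := by
    rw [← sq_abs, ENNReal.ofReal_pow (abs_nonneg _), ← Real.enorm_eq_ofReal_abs, ← mul_pow]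
    gcongr
    exact enorm_integral_mul_le_ofReal_mul_setLIntegral hK hφA hφK fun v => hf0 _
  have hM : ∫⁻ x in S, h x ∂μ ≤ ENNReal.ofReal (r ^ (-δ)) * M := by
    refine (setLIntegral_norm_ge_setLIntegral_le μ ν hF K hr hδ).trans_eq ?_
    congr 2 with z
    rw [ENNReal.ofReal_mul (by positivity)]
  have hN : ∫⁻ x in S, h x ^ p ∂μ ≤ ν K ^ (p - 1) * N := by
    refine (setLIntegral_le_lintegral _ _).trans
      ((lintegral_rpow_setLIntegral_le hF K hp).trans_eq ?_)
    congr 2 with z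
    exact ENNReal.ofReal_rpow_of_nonneg (hf0 z) (by linarith)
  calc ∫⁻ x in S, ENNReal.ofReal ((∫ v, φ v * f (x, v) ∂ν) ^ 2) ∂μ
      ≤ ∫⁻ x in S, ENNReal.ofReal A ^ 2 * h x ^ 2 ∂μ := lintegral_mono hρ
    _ = ENNReal.ofReal A ^ 2 * ∫⁻ x in S, h x ^ 2 ∂μ := lintegral_const_mul' _ _ (by simp)
    _ ≤ ENNReal.ofReal A ^ 2 * ((∫⁻ x in S, h x ∂μ) ^ (1 - θ) * (∫⁻ x in S, h x ^ p ∂μ) ^ θ) := by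
      gcongr
      exact lintegral_sq_le_lintegral_rpow_mul_lintegral_rpow
        (hF.lintegral_prod_right' (ν := ν.restrict K)).aemeasurable ⟨hθ0, hθ1⟩
    _ ≤ ENNReal.ofReal A ^ 2 *
          ((ENNReal.ofReal (r ^ (-δ)) * M) ^ (1 - θ) * (ν K ^ (p - 1) * N) ^ θ) := by
      gcongr
    _ = ENNReal.ofReal A ^ 2 * ν K * ENNReal.ofReal (r ^ (-(δ * (1 - θ)))) *
          (M ^ (1 - θ) * N ^ θ) := by
      have hKexp : (p - 1) * θ = 1 := by simp only [p]; field_simp; ring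
      rw [ENNReal.mul_rpow_of_nonneg _ _ (by linarith), ENNReal.mul_rpow_of_nonneg _ _ hθ0.le,
        ← ENNReal.rpow_mul, hKexp, ENNReal.rpow_one,
        ENNReal.ofReal_rpow_of_nonneg (by positivity) (by linarith), ← Real.rpow_mul hr.le,
        neg_mul]
      ring
    _ ≤ _ := by
      gcongr
      exact ENNReal.rpow_mul_rpow_le_add M N ⟨hθ0.le, hθ1.le⟩

end Moment

theorem stmt14_general (d : ℕ)
    (φ : Euc d → ℝ) (hφcont : Continuous φ) (hφsupp : HasCompactSupport φ)
    (θ : ℝ) (hθ : θ ∈ Set.Ioo (0 : ℝ) 1) (δ : ℝ) (hδ : 0 < δ) :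
    ∃ C : ℝ, 0 < C ∧ ∀ f : Euc d × Euc d → ℝ, Measurable f → (∀ z, 0 ≤ f z) →
      ∀ r : ℝ, 1 ≤ r →
      (∫⁻ x : Euc d in {x : Euc d | r ≤ ‖x‖},
          ENNReal.ofReal ((∫ v : Euc d, φ v * f (x, v)) ^ (2 : ℕ)))
        ≤ ENNReal.ofReal (C * r ^ (-(δ * (1 - θ)))) *
          ((∫⁻ z : Euc d × Euc d, ENNReal.ofReal ((1 + ‖z.1‖ ^ δ) * f z))
            + ∫⁻ z : Euc d × Euc d, ENNReal.ofReal (f z ^ (1 + 1 / θ))) := by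
  obtain ⟨A, hφA⟩ := hφsupp.exists_bound_of_continuous hφcont
  set B : ℝ≥0∞ := ENNReal.ofReal A ^ 2 * volume (tsupport φ)
  have hB : B ≠ ⊤ := ENNReal.mul_ne_top (by simp) hφsupp.measure_lt_top.ne
  refine ⟨B.toReal + 1, by positivity, fun f hf hf0 r hr => ?_⟩
  rw [Measure.volume_eq_prod]
  refine (setLIntegral_norm_ge_sq_integral_mul_le volume volume
    (isClosed_tsupport φ).measurableSet hφA (fun v => image_eq_zero_of_notMem_tsupport)
    hf hf0 hθ hδ.le (by linarith)).trans ?_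
  rw [ENNReal.ofReal_mul (by positivity)]
  gcongr
  calc B = ENNReal.ofReal B.toReal := (ENNReal.ofReal_toReal hB).symm
    _ ≤ ENNReal.ofReal (B.toReal + 1) := ENNReal.ofReal_le_ofReal (by linarith)

/-- uniform integrability in `x` of the velocity averages
`ρ_φ(x) = ∫ φ(v) f(x,v) dv`:
`∫_{|x| ≥ r} |ρ_φ(x)|² dx ≤ C r^{−γ} ( ∫ (1+|x|^δ) f dz + ∫ f^p dz )` with
`p = 1 + 1/θ`, `γ = δ(1−θ)` and `C = C(d, φ, θ, δ)`. -/
theorem stmt14 (d : ℕ) (hd : 1 ≤ d)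
    (φ : Euc d → ℝ) (hφcont : Continuous φ) (hφsupp : HasCompactSupport φ)
    (θ : ℝ) (hθ : θ ∈ Set.Ioo (0 : ℝ) 1) (δ : ℝ) (hδ : 0 < δ) :
    ∃ C : ℝ, 0 < C ∧ ∀ f : Euc d × Euc d → ℝ, Measurable f → (∀ z, 0 ≤ f z) →
      ∀ r : ℝ, 1 ≤ r →
      (∫⁻ x : Euc d in {x : Euc d | r ≤ ‖x‖},
          ENNReal.ofReal ((∫ v : Euc d, φ v * f (x, v)) ^ (2 : ℕ)))
        ≤ ENNReal.ofReal (C * r ^ (-(δ * (1 - θ)))) *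
          ((∫⁻ z : Euc d × Euc d, ENNReal.ofReal ((1 + ‖z.1‖ ^ δ) * f z))
            + ∫⁻ z : Euc d × Euc d, ENNReal.ofReal (f z ^ (1 + 1 / θ))) :=
  stmt14_general d φ hφcont hφsupp θ hθ δ hδ
end

section
/- Let d ≥ 1, let γ > 0, m > d, τ ∈ (0,1), set p = 1 + 1/τ and let k ≥ (2 + 2γ + m)/(1 − τ). Then there exists a constant C, depending only on d, γ, m, τ, such that for every measurable f : ℝ^d × ℝ^d → [0,∞) and every R ≥ 1, ∫_{ℝ^d} ( ∫_{|v| ≥ R} |v| f(x,v) dv )² dx ≤ C R^{−2γ} ( ∫_{ℝ^{2d}} (1 + |v|)^k f(x,v) dx dv + ∫_{ℝ^{2d}} f(x,v)^p dx dv ). -/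
/-!
On `|v| ≥ R` the weight `|v|` is at most `R^(-γ) (1 + |v|)^(1+γ)`. Cauchy–Schwarz against
`(1 + |v|)^(-m)`, which is integrable because `m > d`, then bounds the square of the inner
integral by `∫ (1 + |v|)^A f² dv` with `A = 2 + 2γ + m`. Finally the pointwise interpolation
`u^A t² ≤ u^k t + t^p` (for `u ≥ 1`, `t ≥ 0`, `p = 1 + 1/τ`, `k ≥ A/(1-τ)`) bounds the
`x`-integral of that by the two moments on the right.
-/

open MeasureTheory
open scoped ENNReal

theorem rpow_mul_sq_le_rpow_mul_add_rpow {A k τ u t : ℝ} (hτ : τ ∈ Set.Ioo (0 : ℝ) 1)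
    (hk : A / (1 - τ) ≤ k) (hu : 1 ≤ u) (ht : 0 ≤ t) :
    u ^ A * t ^ 2 ≤ u ^ k * t + t ^ (1 + 1 / τ) := by
  obtain ⟨hτ0, hτ1⟩ := hτ
  have hu0 : 0 < u := one_pos.trans_le hu
  -- Split at `t = u ^ β`, where `β` is chosen so that `A + β = A / (1 - τ)` and
  -- `(u ^ β) ^ (p - 2) = u ^ A` for `p = 1 + 1 / τ`.
  set β := A * τ / (1 - τ) with hβ_def
  have h1τ : 1 - τ ≠ 0 := sub_ne_zero.mpr hτ1.ne'
  have hβ : A + β = A / (1 - τ) := by rw [hβ_def]; field_simp; ring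
  have hβp : β * (1 + 1 / τ - 2) = A := by rw [hβ_def]; field_simp; ring
  rcases le_or_gt t (u ^ β) with htβ | htβ
  · calc u ^ A * t ^ 2 ≤ u ^ A * (u ^ β * t) := by rw [sq]; gcongr
      _ = u ^ (A + β) * t := by rw [Real.rpow_add hu0, mul_assoc]
      _ ≤ u ^ k * t := by gcongr; exact hβ ▸ hk
      _ ≤ u ^ k * t + t ^ (1 + 1 / τ) := le_add_of_nonneg_right (by positivity)
  · have ht0 : 0 < t := (Real.rpow_pos_of_pos hu0 _).trans htβ
    have hp2 : 0 ≤ 1 + 1 / τ - 2 := by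
      have : 1 ≤ 1 / τ := by rw [le_div_iff₀ hτ0]; linarith
      linarith
    calc u ^ A * t ^ 2 = (u ^ β) ^ (1 + 1 / τ - 2) * t ^ (2 : ℝ) := by
          rw [← Real.rpow_mul hu0.le, hβp, Real.rpow_two]
      _ ≤ t ^ (1 + 1 / τ - 2) * t ^ (2 : ℝ) := by gcongr
      _ = t ^ (1 + 1 / τ) := by rw [← Real.rpow_add ht0]; ring_nf
      _ ≤ u ^ k * t + t ^ (1 + 1 / τ) := le_add_of_nonneg_left (by positivity)

theorem le_rpow_neg_mul_one_add_rpow {R r γ : ℝ} (hR : 0 < R) (hγ : 0 ≤ γ) (hRr : R ≤ r) :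
    r ≤ R ^ (-γ) * (1 + r) ^ (1 + γ) := by
  rw [Real.rpow_neg hR.le, le_inv_mul_iff₀ (by positivity),
    Real.rpow_add (by linarith), Real.rpow_one, mul_comm]
  gcongr <;> linarith

theorem ofReal_integral_le_lintegral_ofReal {α : Type*} [MeasurableSpace α] {μ : Measure α}
    {g : α → ℝ} (hg : 0 ≤ g) :
    ENNReal.ofReal (∫ a, g a ∂μ) ≤ ∫⁻ a, ENNReal.ofReal (g a) ∂μ := by
  by_cases h : Integrable g μ
  · rw [ofReal_integral_eq_lintegral_ofReal h (ae_of_all _ hg)]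
  · simp [integral_undef h]

theorem ENNReal.sq_lintegral_mul_le {α : Type*} [MeasurableSpace α] {μ : Measure α}
    {f g : α → ℝ≥0∞} (hf : AEMeasurable f μ) (hg : AEMeasurable g μ) :
    (∫⁻ a, f a * g a ∂μ) ^ 2 ≤ (∫⁻ a, f a ^ 2 ∂μ) * ∫⁻ a, g a ^ 2 ∂μ := by
  have h := ENNReal.lintegral_mul_le_Lp_mul_Lq μ Real.HolderConjugate.two_two hf hg
  have hsq : ∀ x : ℝ≥0∞, (x ^ (1 / 2 : ℝ)) ^ 2 = x := fun x => by
    rw [← ENNReal.rpow_natCast, ← ENNReal.rpow_mul]; norm_num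
  simp only [ENNReal.rpow_two] at h
  calc (∫⁻ a, f a * g a ∂μ) ^ 2 ≤ _ := pow_le_pow_left₀ zero_le h 2
    _ = _ := by rw [mul_pow, hsq, hsq]

theorem sq_lintegral_rpow_mul_le {α : Type*} [MeasurableSpace α] {μ : Measure α}
    {w g : α → ℝ} (hw : Measurable w) (hw0 : ∀ a, 0 < w a) (hg : Measurable g) (hg0 : 0 ≤ g)
    (b m : ℝ) :
    (∫⁻ a, ENNReal.ofReal (w a ^ b * g a) ∂μ) ^ 2 ≤
      (∫⁻ a, ENNReal.ofReal (w a ^ (-m)) ∂μ) *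
        ∫⁻ a, ENNReal.ofReal (w a ^ (2 * b + m) * g a ^ 2) ∂μ := by
  have hprod : ∀ a, ENNReal.ofReal (w a ^ b * g a) =
      ENNReal.ofReal (w a ^ (-(m / 2))) * ENNReal.ofReal (w a ^ (m / 2 + b) * g a) := fun a => by
    rw [← ENNReal.ofReal_mul (Real.rpow_nonneg (hw0 a).le _), ← mul_assoc,
      ← Real.rpow_add (hw0 a)]
    ring_nf
  have hsq_weight : ∀ a, ENNReal.ofReal (w a ^ (-m)) = ENNReal.ofReal (w a ^ (-(m / 2))) ^ 2 :=
    fun a => by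
      rw [← ENNReal.ofReal_pow (Real.rpow_nonneg (hw0 a).le _), ← Real.rpow_natCast,
        ← Real.rpow_mul (hw0 a).le]
      ring_nf
  have hsq_weighted : ∀ a, ENNReal.ofReal (w a ^ (2 * b + m) * g a ^ 2) =
      ENNReal.ofReal (w a ^ (m / 2 + b) * g a) ^ 2 := fun a => by
    rw [← ENNReal.ofReal_pow (mul_nonneg (Real.rpow_nonneg (hw0 a).le _) (hg0 a)), mul_pow,
      ← Real.rpow_natCast (w a ^ _), ← Real.rpow_mul (hw0 a).le]
    ring_nf
  simp_rw [hprod, hsq_weight, hsq_weighted]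
  exact ENNReal.sq_lintegral_mul_le (hw.pow_const _).ennreal_ofReal.aemeasurable
    ((hw.pow_const _).mul hg).ennreal_ofReal.aemeasurable

theorem lintegral_rpow_mul_sq_le {α : Type*} [MeasurableSpace α] {μ : Measure α}
    {w f : α → ℝ} {A k τ : ℝ} (hw : Measurable w) (hw1 : ∀ z, 1 ≤ w z) (hf : Measurable f)
    (hf0 : 0 ≤ f) (hτ : τ ∈ Set.Ioo (0 : ℝ) 1) (hk : A / (1 - τ) ≤ k) :
    ∫⁻ z, ENNReal.ofReal (w z ^ A * f z ^ 2) ∂μ ≤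
      ∫⁻ z, ENNReal.ofReal (w z ^ k * f z) ∂μ + ∫⁻ z, ENNReal.ofReal (f z ^ (1 + 1 / τ)) ∂μ := by
  have hmeas : Measurable fun z => ENNReal.ofReal (w z ^ k * f z) :=
    ((hw.pow_const k).mul hf).ennreal_ofReal
  rw [← lintegral_add_left hmeas]
  refine lintegral_mono fun z => ?_
  have hwz : 0 ≤ w z := zero_le_one.trans (hw1 z)
  rw [← ENNReal.ofReal_add (mul_nonneg (Real.rpow_nonneg hwz _) (hf0 z))
    (Real.rpow_nonneg (hf0 z) _)]
  exact ENNReal.ofReal_le_ofReal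
    (rpow_mul_sq_le_rpow_mul_add_rpow hτ hk (hw1 z) (hf0 z))

section TailBound

variable {E : Type*} [NormedAddCommGroup E] [MeasurableSpace E] [OpensMeasurableSpace E]
  {μ : Measure E} {R γ : ℝ} {g : E → ℝ}

theorem setLIntegral_norm_mul_le (hR : 0 < R) (hγ : 0 ≤ γ) (hg0 : 0 ≤ g) :
    ∫⁻ v in {v | R ≤ ‖v‖}, ENNReal.ofReal (‖v‖ * g v) ∂μ ≤
      ENNReal.ofReal (R ^ (-γ)) * ∫⁻ v, ENNReal.ofReal ((1 + ‖v‖) ^ (1 + γ) * g v) ∂μ := by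
  rw [← lintegral_const_mul' _ _ ENNReal.ofReal_ne_top]
  refine (setLIntegral_mono' (measurableSet_le measurable_const measurable_norm)
    fun v (hv : R ≤ ‖v‖) => ?_).trans (setLIntegral_le_lintegral _ _)
  rw [← ENNReal.ofReal_mul (by positivity), ← mul_assoc]
  have hgv := hg0 v
  gcongr
  exact le_rpow_neg_mul_one_add_rpow hR hγ hv

theorem ofReal_sq_setIntegral_norm_mul_le (hR : 0 < R) (hγ : 0 ≤ γ) (hg : Measurable g)
    (hg0 : 0 ≤ g) (m : ℝ) :
    ENNReal.ofReal ((∫ v in {v | R ≤ ‖v‖}, ‖v‖ * g v ∂μ) ^ 2) ≤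
      ENNReal.ofReal (R ^ (-(2 * γ))) * ((∫⁻ v, ENNReal.ofReal ((1 + ‖v‖) ^ (-m)) ∂μ) *
        ∫⁻ v, ENNReal.ofReal ((1 + ‖v‖) ^ (2 + 2 * γ + m) * g v ^ 2) ∂μ) := by
  have hR2 : ENNReal.ofReal (R ^ (-(2 * γ))) = ENNReal.ofReal (R ^ (-γ)) ^ 2 := by
    rw [← ENNReal.ofReal_pow (by positivity), ← Real.rpow_natCast, ← Real.rpow_mul hR.le]
    ring_nf
  have hexp : (2 : ℝ) + 2 * γ + m = 2 * (1 + γ) + m := by ring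
  rw [ENNReal.ofReal_pow (setIntegral_nonneg (measurableSet_le measurable_const measurable_norm)
    fun v _ => mul_nonneg (norm_nonneg v) (hg0 v)), hR2, hexp]
  calc _ ≤ (∫⁻ v in {v | R ≤ ‖v‖}, ENNReal.ofReal (‖v‖ * g v) ∂μ) ^ 2 := by
        gcongr
        exact ofReal_integral_le_lintegral_ofReal fun v => mul_nonneg (norm_nonneg v) (hg0 v)
    _ ≤ (ENNReal.ofReal (R ^ (-γ)) *
          ∫⁻ v, ENNReal.ofReal ((1 + ‖v‖) ^ (1 + γ) * g v) ∂μ) ^ 2 := by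
        gcongr; exact setLIntegral_norm_mul_le hR hγ hg0
    _ ≤ _ := by
      rw [mul_pow]
      gcongr
      exact sq_lintegral_rpow_mul_le (by fun_prop) (fun v => by positivity) hg hg0 _ _

end TailBound

theorem stmt15_general (d : ℕ) (γ m τ : ℝ) (hγ : 0 < γ) (hm : (d : ℝ) < m)
    (hτ : τ ∈ Set.Ioo (0 : ℝ) 1) (k : ℝ) (hk : (2 + 2 * γ + m) / (1 - τ) ≤ k) :
    ∃ C : ℝ, 0 < C ∧ ∀ f : Euc d × Euc d → ℝ, Measurable f → (∀ z, 0 ≤ f z) →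
      ∀ R : ℝ, 1 ≤ R →
      (∫⁻ x : Euc d, ENNReal.ofReal
          ((∫ v : Euc d in {v : Euc d | R ≤ ‖v‖}, ‖v‖ * f (x, v)) ^ (2 : ℕ)))
        ≤ ENNReal.ofReal (C * R ^ (-(2 * γ))) *
          ((∫⁻ z : Euc d × Euc d, ENNReal.ofReal ((1 + ‖z.2‖) ^ k * f z))
            + ∫⁻ z : Euc d × Euc d, ENNReal.ofReal (f z ^ (1 + 1 / τ))) := by
  set M := ∫⁻ v : Euc d, ENNReal.ofReal ((1 + ‖v‖) ^ (-m))
  have hM : M ≠ ∞ := (finite_integral_one_add_norm (by simpa using hm)).ne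
  refine ⟨M.toReal + 1, by positivity, fun f hf hf0 R hR => ?_⟩
  have hR0 : 0 < R := one_pos.trans_le hR
  have hweight : Measurable fun z : Euc d × Euc d => 1 + ‖z.2‖ := by fun_prop
  have hconst : ENNReal.ofReal (R ^ (-(2 * γ))) * M ≤
      ENNReal.ofReal ((M.toReal + 1) * R ^ (-(2 * γ))) := by
    rw [mul_comm, ENNReal.ofReal_mul (by positivity)]
    gcongr
    rw [ENNReal.le_ofReal_iff_toReal_le hM (by positivity)]
    linarith
  calc _ ≤ ∫⁻ x : Euc d, ENNReal.ofReal (R ^ (-(2 * γ))) * (M *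
          ∫⁻ v, ENNReal.ofReal ((1 + ‖v‖) ^ (2 + 2 * γ + m) * f (x, v) ^ 2)) :=
        lintegral_mono fun x => ofReal_sq_setIntegral_norm_mul_le hR0 hγ.le
          (hf.comp measurable_prodMk_left) (fun v => hf0 _) m
    _ = ENNReal.ofReal (R ^ (-(2 * γ))) * M *
          ∫⁻ z : Euc d × Euc d, ENNReal.ofReal ((1 + ‖z.2‖) ^ (2 + 2 * γ + m) * f z ^ 2) := by
        rw [Measure.volume_eq_prod, lintegral_prod _ (by fun_prop),
          ← lintegral_const_mul' _ _ (ENNReal.mul_ne_top ENNReal.ofReal_ne_top hM)]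
        simp only [mul_assoc]
    _ ≤ _ := mul_le_mul' hconst
        (lintegral_rpow_mul_sq_le hweight (fun z => by simp) hf hf0 hτ hk)

/-- velocity tail estimate:
`∫_x ( ∫_{|v| ≥ R} |v| f(x,v) dv )² dx ≤ C R^{−2γ} ( ∫ (1+|v|)^k f dz + ∫ f^p dz )`
with `p = 1 + 1/τ`, `k ≥ (2+2γ+m)/(1−τ)` and `C = C(d, γ, m, τ)`. -/
theorem stmt15 (d : ℕ) (hd : 1 ≤ d) (γ m τ : ℝ) (hγ : 0 < γ) (hm : (d : ℝ) < m)
    (hτ : τ ∈ Set.Ioo (0 : ℝ) 1) (k : ℝ) (hk : (2 + 2 * γ + m) / (1 - τ) ≤ k) :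
    ∃ C : ℝ, 0 < C ∧ ∀ f : Euc d × Euc d → ℝ, Measurable f → (∀ z, 0 ≤ f z) →
      ∀ R : ℝ, 1 ≤ R →
      (∫⁻ x : Euc d, ENNReal.ofReal
          ((∫ v : Euc d in {v : Euc d | R ≤ ‖v‖}, ‖v‖ * f (x, v)) ^ (2 : ℕ)))
        ≤ ENNReal.ofReal (C * R ^ (-(2 * γ))) *
          ((∫⁻ z : Euc d × Euc d, ENNReal.ofReal ((1 + ‖z.2‖) ^ k * f z))
            + ∫⁻ z : Euc d × Euc d, ENNReal.ofReal (f z ^ (1 + 1 / τ))) :=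
  stmt15_general d γ m τ hγ hm hτ k hk
end

section
/- Let T > 0 and λ > 0, and let h : [0,T] × [0,∞) → ℂ be measurable with ∫₀^T ∫₀^∞ |h(s,u)|² du ds < ∞. Then ∫₀^T | λ ∫₀^t e^{−λ(t−s)} h(s, t−s) ds |² dt ≤ λ ∫₀^T ∫₀^∞ |h(s,u)|² du ds. -/
open MeasureTheory ProbabilityTheory Set
open scoped ENNReal

/-! Writing `λ e^{-λ(t-s)} = p(t - s)` with `p` the exponential density, which has total mass one,
Cauchy–Schwarz against `p(t - s) ds` on `(0, t]` bounds the integrand at time `t` by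
`λ ∫₀^t |h(s, t-s)|² ds`, using `p ≤ λ` on `[0, ∞)`. Integrating in `t` and exchanging the order
of integration over the triangle `0 < s ≤ t ≤ T` (Tonelli) turns `t - s` into a variable `u ≥ 0`. -/

theorem ENNReal.lintegral_mul_sq_le {α : Type*} [MeasurableSpace α] {μ : Measure α}
    {f g : α → ℝ≥0∞} (hf : AEMeasurable f μ) (hg : AEMeasurable g μ) :
    (∫⁻ x, f x * g x ∂μ) ^ 2 ≤ (∫⁻ x, f x ^ 2 ∂μ) * ∫⁻ x, g x ^ 2 ∂μ := by
  have holder := ENNReal.lintegral_mul_le_Lp_mul_Lq μ .two_two hf hg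
  simp only [ENNReal.rpow_two] at holder
  calc (∫⁻ x, f x * g x ∂μ) ^ 2
      ≤ ((∫⁻ x, f x ^ 2 ∂μ) ^ (1 / 2 : ℝ) * (∫⁻ x, g x ^ 2 ∂μ) ^ (1 / 2 : ℝ)) ^ 2 := by
        gcongr; exact holder
    _ = (∫⁻ x, f x ^ 2 ∂μ) * ∫⁻ x, g x ^ 2 ∂μ := by
        rw [mul_pow, ← ENNReal.rpow_two, ← ENNReal.rpow_two, ← ENNReal.rpow_mul, ← ENNReal.rpow_mul]
        norm_num

theorem enorm_integral_smul_sq_le {α E : Type*} [MeasurableSpace α] [NormedAddCommGroup E]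
    [NormedSpace ℝ E] {μ : Measure α} {w : α → ℝ} {f : α → E} (hw : AEMeasurable w μ)
    (hf : AEStronglyMeasurable f μ) (hw0 : 0 ≤ᵐ[μ] w) :
    ‖∫ x, w x • f x ∂μ‖ₑ ^ 2
      ≤ (∫⁻ x, ENNReal.ofReal (w x) ∂μ) * ∫⁻ x, ENNReal.ofReal (w x) * ‖f x‖ₑ ^ 2 ∂μ := by
  set v : α → ℝ≥0∞ := fun x => ENNReal.ofReal (w x) ^ (1 / 2 : ℝ)
  have hv : AEMeasurable v μ := hw.ennreal_ofReal.pow_const _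
  have v_sq : ∀ x, v x ^ 2 = ENNReal.ofReal (w x) := fun x => by
    rw [← ENNReal.rpow_two, ← ENNReal.rpow_mul]; norm_num
  have split : ∀ᵐ x ∂μ, ‖w x • f x‖ₑ = v x * (v x * ‖f x‖ₑ) := by
    filter_upwards [hw0] with x hx
    rw [enorm_smul, Real.enorm_of_nonneg hx, ← mul_assoc, ← sq, v_sq]
  calc ‖∫ x, w x • f x ∂μ‖ₑ ^ 2 ≤ (∫⁻ x, v x * (v x * ‖f x‖ₑ) ∂μ) ^ 2 := by
        gcongr
        exact (enorm_integral_le_lintegral_enorm _).trans_eq (lintegral_congr_ae split)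
    _ ≤ (∫⁻ x, v x ^ 2 ∂μ) * ∫⁻ x, (v x * ‖f x‖ₑ) ^ 2 ∂μ :=
        ENNReal.lintegral_mul_sq_le hv (hv.mul hf.enorm)
    _ = _ := by simp only [mul_pow, v_sq]

theorem lintegral_Ioc_exponentialPDF_sub_le_one {r : ℝ} (hr : 0 < r) (t : ℝ) :
    ∫⁻ s in Ioc 0 t, exponentialPDF r (t - s) ≤ 1 :=
  (setLIntegral_le_lintegral _ _).trans_eq
    ((lintegral_sub_left_eq_self _ t).trans (lintegral_exponentialPDF_eq_one hr))

theorem enorm_smul_integral_exp_kernel_sq_le {E : Type*} [NormedAddCommGroup E]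
    [NormedSpace ℝ E] {lam : ℝ} (hlam : 0 < lam) {t : ℝ} {f : ℝ → E}
    (hf : AEStronglyMeasurable f (volume.restrict (Ioc 0 t))) :
    ‖lam • ∫ s in Ioc 0 t, Real.exp (-(lam * (t - s))) • f s‖ₑ ^ 2
      ≤ ENNReal.ofReal lam * ∫⁻ s in Ioc 0 t, ‖f s‖ₑ ^ 2 := by
  set w : ℝ → ℝ := fun s => lam * Real.exp (-(lam * (t - s)))
  have hw : Measurable w := by fun_prop
  have w_eq : ∀ s ∈ Ioc 0 t, ENNReal.ofReal (w s) = exponentialPDF lam (t - s) :=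
    fun s hs => (exponentialPDF_of_nonneg (sub_nonneg.2 hs.2)).symm
  have w_le : ∀ s ∈ Ioc 0 t, w s ≤ lam := fun s hs => mul_le_of_le_one_right hlam.le
    (Real.exp_le_one_iff.2 (neg_nonpos.2 (mul_nonneg hlam.le (sub_nonneg.2 hs.2))))
  have hw0 : 0 ≤ᵐ[volume.restrict (Ioc 0 t)] w := .of_forall fun s => by positivity
  calc ‖lam • ∫ s in Ioc 0 t, Real.exp (-(lam * (t - s))) • f s‖ₑ ^ 2
      = ‖∫ s in Ioc 0 t, w s • f s‖ₑ ^ 2 := by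
        simp only [w, ← integral_smul, smul_smul]
    _ ≤ (∫⁻ s in Ioc 0 t, ENNReal.ofReal (w s))
          * ∫⁻ s in Ioc 0 t, ENNReal.ofReal (w s) * ‖f s‖ₑ ^ 2 :=
        enorm_integral_smul_sq_le hw.aemeasurable hf hw0
    _ ≤ 1 * ∫⁻ s in Ioc 0 t, ENNReal.ofReal lam * ‖f s‖ₑ ^ 2 := by
        gcongr ?_ * ?_
        · rw [setLIntegral_congr_fun measurableSet_Ioc w_eq]
          exact lintegral_Ioc_exponentialPDF_sub_le_one hlam t
        · exact setLIntegral_mono' measurableSet_Ioc fun s hs => by gcongr; exact w_le s hs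
    _ = ENNReal.ofReal lam * ∫⁻ s in Ioc 0 t, ‖f s‖ₑ ^ 2 := by
        rw [one_mul, lintegral_const_mul' _ _ ENNReal.ofReal_ne_top]

theorem lintegral_Ioc_lintegral_Ioc_sub_le {g : ℝ → ℝ → ℝ≥0∞} (hg : Measurable (Function.uncurry g))
    (T : ℝ) :
    ∫⁻ t in Ioc 0 T, ∫⁻ s in Ioc 0 t, g s (t - s) ≤ ∫⁻ s in Ioc 0 T, ∫⁻ u in Ioi 0, g s u := by
  set G : ℝ → ℝ → ℝ≥0∞ := fun s => (Ici 0).indicator (g s)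
  have hG : Measurable (Function.uncurry G) :=
    hg.ite (measurableSet_Ici.preimage measurable_snd) measurable_const
  have inner_le : ∀ t ∈ Ioc 0 T, ∫⁻ s in Ioc 0 t, g s (t - s) ≤ ∫⁻ s in Ioc 0 T, G s (t - s) :=
    fun t ht => calc ∫⁻ s in Ioc 0 t, g s (t - s) = ∫⁻ s in Ioc 0 t, G s (t - s) :=
          setLIntegral_congr_fun measurableSet_Ioc fun s hs =>
            (indicator_of_mem (sub_nonneg.2 hs.2) _).symm
      _ ≤ _ := lintegral_mono_set (Ioc_subset_Ioc_right ht.2)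
  calc ∫⁻ t in Ioc 0 T, ∫⁻ s in Ioc 0 t, g s (t - s)
      ≤ ∫⁻ t in Ioc 0 T, ∫⁻ s in Ioc 0 T, G s (t - s) :=
        setLIntegral_mono' measurableSet_Ioc inner_le
    _ = ∫⁻ s in Ioc 0 T, ∫⁻ t in Ioc 0 T, G s (t - s) :=
        lintegral_lintegral_swap
          (hG.comp (measurable_snd.prodMk (measurable_fst.sub measurable_snd))).aemeasurable
    _ ≤ ∫⁻ s in Ioc 0 T, ∫⁻ t, G s (t - s) := lintegral_mono fun s => setLIntegral_le_lintegral _ _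
    _ = ∫⁻ s in Ioc 0 T, ∫⁻ u in Ioi 0, g s u := by
        refine lintegral_congr fun s => ?_
        rw [lintegral_sub_right_eq_self (G s) s, lintegral_indicator measurableSet_Ici,
          restrict_Ioi_eq_restrict_Ici]

theorem stmt17_general (T lam : ℝ) (hlam : 0 < lam)
    (h : ℝ → ℝ → ℂ) (hmeas : Measurable (Function.uncurry h)) :
    (∫⁻ t in Set.Ioc (0 : ℝ) T, ENNReal.ofReal
        (‖lam • ∫ s in Set.Ioc (0 : ℝ) t,
            Real.exp (-(lam * (t - s))) • h s (t - s)‖ ^ (2 : ℕ)))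
      ≤ ENNReal.ofReal lam *
          ∫⁻ s in Set.Ioc (0 : ℝ) T,
            ∫⁻ u in Set.Ioi (0 : ℝ), ENNReal.ofReal (‖h s u‖ ^ (2 : ℕ)) := by
  have ofReal_norm_sq : ∀ z : ℂ, ENNReal.ofReal (‖z‖ ^ 2) = ‖z‖ₑ ^ 2 := fun z => by
    rw [ENNReal.ofReal_pow (norm_nonneg z), ofReal_norm]
  simp only [ofReal_norm_sq]
  calc ∫⁻ t in Ioc 0 T, ‖lam • ∫ s in Ioc 0 t, Real.exp (-(lam * (t - s))) • h s (t - s)‖ₑ ^ 2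
      ≤ ∫⁻ t in Ioc 0 T, ENNReal.ofReal lam * ∫⁻ s in Ioc 0 t, ‖h s (t - s)‖ₑ ^ 2 :=
        lintegral_mono fun t => enorm_smul_integral_exp_kernel_sq_le hlam <|
          (hmeas.comp (measurable_id.prodMk (measurable_const.sub measurable_id)))
            |>.aestronglyMeasurable
    _ = ENNReal.ofReal lam * ∫⁻ t in Ioc 0 T, ∫⁻ s in Ioc 0 t, ‖h s (t - s)‖ₑ ^ 2 :=
        lintegral_const_mul' _ _ ENNReal.ofReal_ne_top
    _ ≤ ENNReal.ofReal lam * ∫⁻ s in Ioc 0 T, ∫⁻ u in Ioi 0, ‖h s u‖ₑ ^ 2 :=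
        mul_le_mul_right (lintegral_Ioc_lintegral_Ioc_sub_le (g := fun s u => ‖h s u‖ₑ ^ 2)
          (hmeas.enorm.pow_const 2) T) _

/-- the exponential-kernel estimate used to bound `J₂(ξ)` in the
stochastic averaging lemma:
`∫₀^T | λ ∫₀^t e^{−λ(t−s)} h(s, t−s) ds |² dt ≤ λ ∫₀^T ∫₀^∞ |h(s,u)|² du ds`. -/
theorem stmt17 (T lam : ℝ) (hT : 0 < T) (hlam : 0 < lam)
    (h : ℝ → ℝ → ℂ) (hmeas : Measurable (Function.uncurry h))
    (hint : (∫⁻ s in Set.Ioc (0 : ℝ) T,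
        ∫⁻ u in Set.Ioi (0 : ℝ), ENNReal.ofReal (‖h s u‖ ^ (2 : ℕ))) < ⊤) :
    (∫⁻ t in Set.Ioc (0 : ℝ) T, ENNReal.ofReal
        (‖lam • ∫ s in Set.Ioc (0 : ℝ) t,
            Real.exp (-(lam * (t - s))) • h s (t - s)‖ ^ (2 : ℕ)))
      ≤ ENNReal.ofReal lam *
          ∫⁻ s in Set.Ioc (0 : ℝ) T,
            ∫⁻ u in Set.Ioi (0 : ℝ), ENNReal.ofReal (‖h s u‖ ^ (2 : ℕ)) :=
  stmt17_general T lam hlam h hmeas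
end
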